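/- arXiv:0907.2748 — 5 statements merged into one kernel-verified Lean document; each statement's English description precedes it below -/
import Mathlib

section
/- For each integer n ≥ 0, the function g_n(x) = Σ_{i=0}^{n} (2n+1)!/((2(n-i))!! (2i+1)!) · x^{2i+1} is a solution of the ODE y'' + x y' - (2n+1) y = 0 on ℝ. -/
open Nat Finset MeasureTheory Real

noncomputable def gp (n : ℕ) (x : ℝ) : ℝ :=
  ∑ i ∈ Finset.range (n+1), ((2*n+1)! : ℝ) / ((2*(n-i))‼ * (2*i+1)!) * x^(2*i+1)

noncomputable def hp (n : ℕ) (x : ℝ) : ℝ :=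
  ∑ i ∈ Finset.range (n+1), ((n+i)! * (n-i)! : ℝ) / ((2*(n-i))‼ * (2*i)!) *
    (∑ j ∈ Finset.range (n-i+1), ((2*n+1).choose j : ℝ)) * x^(2*i)

noncomputable def cc (n i : ℕ) : ℝ := ((2*n+1)! : ℝ) / ((2*(n-i))‼ * (2*i+1)!)

lemma key (n i : ℕ) (h : i < n) :
    cc n (i+1) * ((2*i+3) * (2*i+2)) + cc n i * ((2*i+1 : ℝ) - (2*n+1)) = 0 := by
  unfold cc
  have h1 : n - (i+1) = n - i - 1 := by omega
  have h2 : 2*(n-i) = 2*(n-i-1) + 2 := by omega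
  have hDn : (2*(n-i))‼ = (2*(n-i)) * (2*(n-i-1))‼ := by
    rw [h2, Nat.doubleFactorial_add_two, ← h2]
  have hD : ((2*(n-i))‼ : ℝ) = ((2*(n-i) : ℕ) : ℝ) * (2*(n-i-1))‼ := by
    exact_mod_cast congrArg (Nat.cast : ℕ → ℝ) hDn
  have hF : ((2*(i+1)+1)! : ℝ) = (2*i+3)*((2*i+2)*(2*i+1)!) := by
    have : 2*(i+1)+1 = (2*i+1) + 1 + 1 := by ring
    rw [this, Nat.factorial_succ, Nat.factorial_succ]
    push_cast; ring
  have hd1 : ((2*(n-i-1))‼ : ℝ) ≠ 0 := by positivity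
  have hd2 : ((2*i+1)! : ℝ) ≠ 0 := by positivity
  have hni : (n:ℝ) - i ≠ 0 := by
    have : (i:ℝ) < n := by exact_mod_cast h
    linarith
  rw [h1, hD, hF]
  push_cast [Nat.cast_sub h.le]
  field_simp
  ring

lemma gp_hasDerivAt (n : ℕ) (x : ℝ) :
    HasDerivAt (gp n) (∑ i ∈ Finset.range (n+1), cc n i * ((2*i+1) * x^(2*i))) x := by
  have e : gp n = fun y => ∑ i ∈ Finset.range (n+1), cc n i * y^(2*i+1) := rfl
  rw [e]
  apply HasDerivAt.fun_sum
  intro i _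
  have h := (hasDerivAt_pow (2*i+1) x).const_mul (cc n i)
  have : (2*i+1) - 1 = 2*i := by omega
  rw [this] at h
  convert h using 1
  · rfl
  push_cast; ring

lemma gp1_hasDerivAt (n : ℕ) (x : ℝ) :
    HasDerivAt (fun y => ∑ i ∈ Finset.range (n+1), cc n i * ((2*i+1) * y^(2*i)))
      (∑ i ∈ Finset.range (n+1), cc n i * ((2*i+1) * ((2*i) * x^(2*i-1)))) x := by
  apply HasDerivAt.fun_sum
  intro i _
  have h := (hasDerivAt_pow (2*i) x).const_mul (cc n i * (2*i+1))
  convert h using 1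
  · rfl
  · ext y; ring
  · push_cast; ring

theorem stmt1 (n : ℕ) :
    ∀ x : ℝ, deriv (deriv (gp n)) x + x * deriv (gp n) x - (2*n+1) * gp n x = 0 := by
  intro x
  have hd1 : deriv (gp n) = fun y => ∑ i ∈ Finset.range (n+1), cc n i * ((2*i+1) * y^(2*i)) :=
    funext fun y => (gp_hasDerivAt n y).deriv
  rw [hd1, (gp1_hasDerivAt n x).deriv]
  have hgp : gp n x = ∑ i ∈ Finset.range (n+1), cc n i * x^(2*i+1) := rfl
  rw [hgp]
  set A : ℕ → ℝ := fun i => cc n i * ((2*i+1) * ((2*i) * x^(2*i-1))) with hA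
  set B : ℕ → ℝ := fun i => cc n i * ((2*i+1 : ℝ) - (2*n+1)) * x^(2*i+1) with hB
  have step1 : x * (∑ i ∈ Finset.range (n+1), cc n i * ((2*i+1) * x^(2*i)))
      - (2*n+1 : ℝ) * ∑ i ∈ Finset.range (n+1), cc n i * x^(2*i+1)
      = ∑ i ∈ Finset.range (n+1), B i := by
    rw [Finset.mul_sum, Finset.mul_sum, ← Finset.sum_sub_distrib]
    refine Finset.sum_congr rfl fun i _ => ?_
    simp only [hB, pow_succ]
    ring
  beta_reduce
  rw [add_sub_assoc, step1]
  have hA0 : A 0 = 0 := by simp [hA]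
  have hBn : B n = 0 := by simp [hB]
  rw [Finset.sum_range_succ' A, Finset.sum_range_succ B, hA0, hBn, add_zero, add_zero,
    ← Finset.sum_add_distrib]
  refine Finset.sum_eq_zero fun i hi => ?_
  have hi' : i < n := Finset.mem_range.mp hi
  have he : 2*(i+1)-1 = 2*i+1 := by omega
  have : A (i+1) + B i
      = (cc n (i+1) * ((2*i+3) * (2*i+2)) + cc n i * ((2*i+1 : ℝ) - (2*n+1))) * x^(2*i+1) := by
    simp only [hA, hB, he]
    push_cast
    ring
  rw [this, key n i hi', zero_mul]
end

section
/- For each integer n ≥ 0 and all x ∈ ℝ, the polynomial g_n(x) equals the Gaussian expectation E[(x + Z)^{2n+1}], where Z is a standard normal random variable; that is, g_n(x) = (1/√(2π)) ∫_{-∞}^{∞} (x + t)^{2n+1} exp(-t²/2) dt. -/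
open Nat Finset MeasureTheory Real

open Filter in
lemma integrable_aux (k : ℕ) :
    Integrable (fun t : ℝ => t ^ k * Real.exp (-t^2/2)) := by
  have h := integrable_rpow_mul_exp_neg_mul_sq (b := (1/2 : ℝ)) (by norm_num)
    (s := (k : ℝ)) (lt_of_lt_of_le neg_one_lt_zero (Nat.cast_nonneg k))
  refine h.congr (Filter.Eventually.of_forall fun t => ?_)
  simp only [Real.rpow_natCast]
  rw [show -(1/2 : ℝ) * t^2 = -t^2/2 by ring]

open Filter Topology in
lemma tend_aux (k : ℕ) {l : Filter ℝ} (hl : l ≤ cocompact ℝ) :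
    Tendsto (fun t : ℝ => -t ^ k * Real.exp (-t^2/2)) l (𝓝 0) := by
  have h := (tendsto_rpow_abs_mul_exp_neg_mul_sq_cocompact (a := (1/2:ℝ)) (by norm_num)
    (k : ℝ)).mono_left hl
  rw [tendsto_zero_iff_norm_tendsto_zero]
  refine h.congr fun t => ?_
  rw [Real.rpow_natCast, show -(1/2:ℝ) * t^2 = -t^2/2 by ring, norm_mul, norm_neg, norm_pow,
    Real.norm_eq_abs, Real.norm_of_nonneg (Real.exp_pos _).le]

lemma hderiv_exp_aux (t : ℝ) :
    HasDerivAt (fun t : ℝ => Real.exp (-t^2/2)) (-t * Real.exp (-t^2/2)) t := by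
  have h : HasDerivAt (fun x : ℝ => -x^2/2) (-t) t := by
    have h0 := ((hasDerivAt_pow 2 t).neg).div_const 2
    refine h0.congr_deriv ?_
    push_cast
    ring
  have h1 := h.exp
  convert h1 using 1
  ring

lemma hderiv_aux (m : ℕ) (t : ℝ) :
    HasDerivAt (fun t : ℝ => -t ^ (m+1) * Real.exp (-t^2/2))
      (t^(m+2) * Real.exp (-t^2/2) - ((m:ℝ)+1) * (t^m * Real.exp (-t^2/2))) t := by
  have h1 : HasDerivAt (fun t : ℝ => -t^(m+1)) (-(((m:ℝ)+1) * t^m)) t := by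
    have h0 := (hasDerivAt_pow (m+1) t).neg
    refine h0.congr_deriv ?_
    push_cast
    ring_nf
  have := h1.mul (hderiv_exp_aux t)
  refine this.congr_deriv ?_
  ring

lemma moment_rec (k : ℕ) :
    ∫ t : ℝ, t^(k+2) * Real.exp (-t^2/2)
      = ((k:ℝ)+1) * ∫ t : ℝ, t^k * Real.exp (-t^2/2) := by
  have hint : Integrable (fun t : ℝ =>
      t^(k+2) * Real.exp (-t^2/2) - ((k:ℝ)+1) * (t^k * Real.exp (-t^2/2))) :=
    (integrable_aux (k+2)).sub ((integrable_aux k).const_mul _)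
  have h0 : ∫ t : ℝ, (t^(k+2) * Real.exp (-t^2/2)
        - ((k:ℝ)+1) * (t^k * Real.exp (-t^2/2))) = 0 - 0 :=
    MeasureTheory.integral_of_hasDerivAt_of_tendsto (hderiv_aux k) hint
      (tend_aux (k+1) _root_.atBot_le_cocompact) (tend_aux (k+1) _root_.atTop_le_cocompact)
  rw [integral_sub (integrable_aux (k+2)) ((integrable_aux k).const_mul _),
    integral_const_mul] at h0
  linarith

lemma moment_one : ∫ t : ℝ, t^1 * Real.exp (-t^2/2) = 0 := by
  have h0 : ∫ t : ℝ, t^1 * Real.exp (-t^2/2) = 0 - 0 := by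
    refine MeasureTheory.integral_of_hasDerivAt_of_tendsto
      (f := fun t : ℝ => -Real.exp (-t^2/2)) (fun t => ?_) (integrable_aux 1) ?_ ?_
    · simpa [pow_one, Pi.neg_def] using (hderiv_exp_aux t).neg
    · simpa using tend_aux 0 _root_.atBot_le_cocompact
    · simpa using tend_aux 0 _root_.atTop_le_cocompact
  simpa using h0

lemma moment_odd (j : ℕ) : ∫ t : ℝ, t^(2*j+1) * Real.exp (-t^2/2) = 0 := by
  induction j with
  | zero => simpa using moment_one
  | succ j ih =>
      rw [show 2*(j+1)+1 = (2*j+1)+2 by ring, moment_rec, ih, mul_zero]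

lemma moment_even (j : ℕ) :
    ∫ t : ℝ, t^(2*j) * Real.exp (-t^2/2)
      = (((2*j)! : ℝ) / (2^j * (j)!)) * Real.sqrt (2*Real.pi) := by
  induction j with
  | zero =>
      have h := integral_gaussian (1/2 : ℝ)
      rw [show Real.pi / (1/2 : ℝ) = 2*Real.pi by ring] at h
      simp_rw [show ∀ t : ℝ, -(1/2:ℝ)*t^2 = -t^2/2 from fun t => by ring] at h
      simp [h, Nat.factorial]
  | succ j ih =>
      rw [show 2*(j+1) = 2*j+2 by ring, moment_rec, ih]
      have h1 : ((j:ℝ)+1) ≠ 0 := by positivity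
      have h2 : ((j)! : ℝ) ≠ 0 := Nat.cast_ne_zero.mpr (Nat.factorial_ne_zero j)
      have h3 : (2:ℝ)^j ≠ 0 := by positivity
      rw [show (2*j+2)! = (2*j+2) * ((2*j+1) * (2*j)!) by
        rw [show 2*j+2 = 2*j+1+1 by ring, Nat.factorial_succ, Nat.factorial_succ]]
      rw [show (j+1)! = (j+1) * (j)! from Nat.factorial_succ j]
      push_cast
      field_simp
      ring

lemma sum_split (m : ℕ) (f : ℕ → ℝ) :
    ∑ k ∈ Finset.range (2*m), f k
      = (∑ i ∈ Finset.range m, f (2*i)) + ∑ i ∈ Finset.range m, f (2*i+1) := by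
  induction m with
  | zero => simp
  | succ m ih =>
      rw [show 2*(m+1) = 2*m+1+1 by ring, Finset.sum_range_succ, Finset.sum_range_succ, ih,
        Finset.sum_range_succ, Finset.sum_range_succ]
      ring

lemma coeff_eq (n i : ℕ) (hi : i ≤ n) :
    ((2*n+1)! : ℝ) / ((2*(n-i))‼ * (2*i+1)!)
      = ((2*n+1).choose (2*i+1) : ℝ) * (((2*(n-i))! : ℝ) / (2^(n-i) * (n-i)!)) := by
  have h2 : (2*n+1).choose (2*i+1) * (2*i+1)! * (2*(n-i))! = (2*n+1)! := by
    have h := Nat.choose_mul_factorial_mul_factorial (show 2*i+1 ≤ 2*n+1 by omega)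
    rwa [show 2*n+1 - (2*i+1) = 2*(n-i) by omega] at h
  rw [Nat.doubleFactorial_two_mul, ← h2]
  have h3 : (2:ℝ)^(n-i) ≠ 0 := by positivity
  have h4 : (((n-i))! : ℝ) ≠ 0 := Nat.cast_ne_zero.mpr (Nat.factorial_ne_zero _)
  have h5 : (((2*i+1))! : ℝ) ≠ 0 := Nat.cast_ne_zero.mpr (Nat.factorial_ne_zero _)
  have h6 : (((2*(n-i)))! : ℝ) ≠ 0 := Nat.cast_ne_zero.mpr (Nat.factorial_ne_zero _)
  push_cast
  field_simp

theorem stmt3 (n : ℕ) (x : ℝ) :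
    gp n x = (Real.sqrt (2 * Real.pi))⁻¹ *
      ∫ t : ℝ, (x + t)^(2*n+1) * Real.exp (-t^2/2) := by
  have hπ : (0:ℝ) < Real.sqrt (2*Real.pi) := Real.sqrt_pos.mpr (by positivity)
  have hexp : ∀ t : ℝ, (x+t)^(2*n+1) * Real.exp (-t^2/2)
      = ∑ k ∈ Finset.range (2*n+1+1),
          x^k * ((2*n+1).choose k : ℝ) * (t^(2*n+1-k) * Real.exp (-t^2/2)) := by
    intro t
    rw [add_pow, Finset.sum_mul]
    exact Finset.sum_congr rfl fun k _ => by ring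
  have hI : ∫ t : ℝ, (x+t)^(2*n+1) * Real.exp (-t^2/2)
      = ∑ k ∈ Finset.range (2*n+1+1),
          x^k * ((2*n+1).choose k : ℝ) * ∫ t : ℝ, t^(2*n+1-k) * Real.exp (-t^2/2) := by
    simp_rw [hexp]
    rw [integral_finset_sum _ (fun k _ => ((integrable_aux _).const_mul _))]
    exact Finset.sum_congr rfl fun k _ => integral_const_mul _ _
  rw [hI, show 2*n+1+1 = 2*(n+1) by ring, sum_split]
  have heven : ∑ i ∈ Finset.range (n+1),
      x^(2*i) * ((2*n+1).choose (2*i) : ℝ) * ∫ t : ℝ, t^(2*n+1-2*i) * Real.exp (-t^2/2) = 0 := by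
    refine Finset.sum_eq_zero fun i hi => ?_
    have hi' : i ≤ n := Nat.lt_succ_iff.mp (Finset.mem_range.mp hi)
    rw [show 2*n+1-2*i = 2*(n-i)+1 by omega, moment_odd, mul_zero]
  rw [heven, zero_add, gp, Finset.mul_sum]
  refine Finset.sum_congr rfl fun i hi => ?_
  have hi' : i ≤ n := Nat.lt_succ_iff.mp (Finset.mem_range.mp hi)
  rw [show 2*n+1-(2*i+1) = 2*(n-i) by omega, moment_even, coeff_eq n i hi']
  field_simp
end

section
/- For each integer n ≥ 0 and all x ∈ ℝ, h_n(x) exp(-x²/2) - g_n(x) ∫_x^∞ exp(-t²/2) dt = ∫_{-∞}^{-x} (-x - t)^{2n+1} exp(-t²/2) dt; equivalently, this quantity equals √(2π) E[((x+Z)^-)^{2n+1}] for Z standard normal, where a^- = max(-a, 0). -/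
open Nat Finset MeasureTheory Real

open Filter Set Topology

lemma integrable_pow_gauss (i : ℕ) : Integrable (fun s : ℝ => s^i * Real.exp (-s^2/2)) := by
  have h := integrable_rpow_mul_exp_neg_mul_sq (b := (1:ℝ)/2) (by norm_num) (s := (i:ℝ))
    (by have : (0:ℝ) ≤ i := Nat.cast_nonneg i; linarith)
  simp_rw [Real.rpow_natCast] at h
  convert h using 2 with s
  ring_nf

lemma integrable_shift_gauss (x : ℝ) (k : ℕ) :
    Integrable (fun s : ℝ => (s - x)^k * Real.exp (-s^2/2)) := by
  have : (fun s : ℝ => (s - x)^k * Real.exp (-s^2/2))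
      = fun s => ∑ i ∈ Finset.range (k+1),
        ((-x)^(k-i) * (k.choose i)) * (s^i * Real.exp (-s^2/2)) := by
    funext s
    rw [sub_eq_add_neg, add_pow, Finset.sum_mul]
    exact Finset.sum_congr rfl fun i _ => by ring
  rw [this]
  exact integrable_finset_sum _ fun i _ => (integrable_pow_gauss i).const_mul _

lemma tendsto_pow_gauss (i : ℕ) :
    Tendsto (fun s : ℝ => s^(2*i) * Real.exp (-s^2/2)) atTop (𝓝 0) := by
  have h1 : Tendsto (fun s : ℝ => s^2/2) atTop atTop :=
    (tendsto_pow_atTop two_ne_zero).atTop_div_const (by norm_num)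
  have h2 := (tendsto_pow_mul_exp_neg_atTop_nhds_zero i).comp h1
  have h3 : Tendsto (fun s : ℝ => (2:ℝ)^i * ((s^2/2)^i * Real.exp (-(s^2/2)))) atTop
      (𝓝 ((2:ℝ)^i * 0)) := h2.const_mul _
  rw [mul_zero] at h3
  refine h3.congr fun s => ?_
  rw [div_pow, neg_div]
  field_simp
  ring

lemma tendsto_shift_gauss (x : ℝ) (k : ℕ) :
    Tendsto (fun s : ℝ => (s - x)^k * Real.exp (-s^2/2)) atTop (𝓝 0) := by
  refine squeeze_zero_norm' (a := fun s : ℝ => s^(2*k) * Real.exp (-s^2/2)) ?_ ?_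
  · filter_upwards [eventually_ge_atTop (max 2 (2*|x|))] with s hs
    have hs2 : (2:ℝ) ≤ s := le_trans (le_max_left _ _) hs
    have hsx : 2*|x| ≤ s := le_trans (le_max_right _ _) hs
    have h0 : |s - x| ≤ s^2 := by
      have : |s - x| ≤ |s| + |x| := abs_sub _ _
      have h1 : |s| = s := abs_of_nonneg (by linarith)
      nlinarith [abs_nonneg x]
    have : ‖(s - x)^k * Real.exp (-s^2/2)‖ = |s - x|^k * Real.exp (-s^2/2) := by
      rw [norm_mul, norm_pow, Real.norm_eq_abs, Real.norm_eq_abs,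
        abs_of_pos (Real.exp_pos _)]
    rw [this, pow_mul]
    gcongr
  · exact tendsto_pow_gauss k

noncomputable def Kf (x : ℝ) (k : ℕ) : ℝ := ∫ s in Set.Ioi x, (s-x)^k * Real.exp (-s^2/2)

lemma deriv_aux (x : ℝ) (k : ℕ) (s : ℝ) :
    HasDerivAt (fun s : ℝ => -(s-x)^(k+1) * Real.exp (-s^2/2))
      (((s-x)^(k+2) + x*(s-x)^(k+1) - ((k:ℝ)+1)*(s-x)^k) * Real.exp (-s^2/2)) s := by
  have h1 := (((hasDerivAt_id s).sub_const x).pow (k+1)).neg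
  simp only [id_eq, Nat.add_sub_cancel] at h1
  have h2 : HasDerivAt (fun s : ℝ => Real.exp (-s^2/2))
      (Real.exp (-s^2/2) * (-(2*s^1)/2)) s :=
    HasDerivAt.exp ((hasDerivAt_pow 2 s).neg.div_const 2)
  have := h1.mul h2
  refine this.congr_deriv ?_
  simp only [Pi.neg_apply, Pi.pow_apply]
  push_cast
  ring

lemma Kf_step (x : ℝ) (k : ℕ) :
    Kf x (k+2) = ((k:ℝ)+1) * Kf x k - x * Kf x (k+1) := by
  have hI : ∀ m : ℕ, IntegrableOn (fun s : ℝ => (s-x)^m * Real.exp (-s^2/2)) (Set.Ioi x) :=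
    fun m => (integrable_shift_gauss x m).integrableOn
  have hIa : Integrable (fun s : ℝ => (s-x)^(k+2) * Real.exp (-s^2/2)
      + x * ((s-x)^(k+1) * Real.exp (-s^2/2))) (volume.restrict (Set.Ioi x)) :=
    (hI (k+2)).add ((hI (k+1)).const_mul x)
  have hIb : Integrable (fun s : ℝ => ((k:ℝ)+1) * ((s-x)^k * Real.exp (-s^2/2)))
      (volume.restrict (Set.Ioi x)) := (hI k).const_mul _
  have hfun : (fun s : ℝ => ((s-x)^(k+2) + x*(s-x)^(k+1) - ((k:ℝ)+1)*(s-x)^k) * Real.exp (-s^2/2))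
      = fun s : ℝ => ((s-x)^(k+2) * Real.exp (-s^2/2) + x * ((s-x)^(k+1) * Real.exp (-s^2/2)))
        - ((k:ℝ)+1) * ((s-x)^k * Real.exp (-s^2/2)) := by
    funext s; ring
  have key : (∫ s in Set.Ioi x,
      ((s-x)^(k+2) + x*(s-x)^(k+1) - ((k:ℝ)+1)*(s-x)^k) * Real.exp (-s^2/2))
      = 0 - -(x-x)^(k+1) * Real.exp (-x^2/2) := by
    apply integral_Ioi_of_hasDerivAt_of_tendsto' (fun s _ => deriv_aux x k s)
    · rw [hfun]; exact hIa.sub hIb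
    · have := (tendsto_shift_gauss x (k+1)).neg
      simpa using this
  rw [hfun, integral_sub hIa hIb,
    integral_add (hI (k+2)) ((hI (k+1)).const_mul x), MeasureTheory.integral_const_mul, MeasureTheory.integral_const_mul]
    at key
  rw [sub_self, zero_pow (Nat.succ_ne_zero k), neg_zero, zero_mul, sub_zero] at key
  unfold Kf
  linarith [key]

lemma Kf_one (x : ℝ) : Kf x 1 = Real.exp (-x^2/2) - x * Kf x 0 := by
  have hI : ∀ m : ℕ, IntegrableOn (fun s : ℝ => (s-x)^m * Real.exp (-s^2/2)) (Set.Ioi x) :=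
    fun m => (integrable_shift_gauss x m).integrableOn
  have hIa : Integrable (fun s : ℝ => (s-x)^1 * Real.exp (-s^2/2)
      + x * ((s-x)^0 * Real.exp (-s^2/2))) (volume.restrict (Set.Ioi x)) :=
    (hI 1).add ((hI 0).const_mul x)
  have hfun : (fun s : ℝ => ((s-x)^1 + x*(s-x)^0) * Real.exp (-s^2/2))
      = fun s : ℝ => (s-x)^1 * Real.exp (-s^2/2) + x * ((s-x)^0 * Real.exp (-s^2/2)) := by
    funext s; ring
  have key : (∫ s in Set.Ioi x, ((s-x)^1 + x*(s-x)^0) * Real.exp (-s^2/2))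
      = 0 - -Real.exp (-x^2/2) := by
    apply integral_Ioi_of_hasDerivAt_of_tendsto'
      (f := fun s : ℝ => -Real.exp (-s^2/2))
    · intro s _
      have h2 : HasDerivAt (fun s : ℝ => Real.exp (-s^2/2))
          (Real.exp (-s^2/2) * (-(2*s^1)/2)) s :=
        HasDerivAt.exp ((hasDerivAt_pow 2 s).neg.div_const 2)
      convert h2.neg using 1
      · rfl
      ring
    · rw [hfun]; exact hIa
    · have := (tendsto_shift_gauss x 0).neg
      simpa using this
  rw [hfun, integral_add (hI 1) ((hI 0).const_mul x), MeasureTheory.integral_const_mul] at key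
  simp only [zero_sub, neg_neg] at key
  unfold Kf
  linarith [key]

lemma J_eq_Kf (x : ℝ) (k : ℕ) :
    (∫ t in Set.Iio (-x), (-x - t)^k * Real.exp (-t^2/2)) = Kf x k := by
  rw [← MeasureTheory.integral_Iic_eq_integral_Iio,
    ← integral_comp_neg_Ioi x (fun t => (-x - t)^k * Real.exp (-t^2/2))]
  unfold Kf
  congr 1
  funext s
  have h1 : -x - -s = s - x := by ring
  have h2 : (-s:ℝ)^2 = s^2 := by ring
  rw [h1, h2]

noncomputable def TT (k j : ℕ) : ℝ := ∑ l ∈ Finset.range (j+1), ((k.choose l : ℕ) : ℝ)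

noncomputable def gpe (n : ℕ) (x : ℝ) : ℝ :=
  ∑ i ∈ Finset.range (n+1), ((2*n)! : ℝ) / ((2*(n-i))‼ * (2*i)!) * x^(2*i)

noncomputable def hpe (n : ℕ) (x : ℝ) : ℝ :=
  ∑ i ∈ Finset.range n, ((n+i)! * (n-1-i)! : ℝ) / ((2*(n-1-i))‼ * (2*i+1)!) *
    TT (2*n) (n-1-i) * x^(2*i+1)

lemma hp_eq (n : ℕ) (x : ℝ) : hp n x
    = ∑ i ∈ Finset.range (n+1), ((n+i)! * (n-i)! : ℝ) / ((2*(n-i))‼ * (2*i)!) *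
      TT (2*n+1) (n-i) * x^(2*i) := rfl

lemma chooseAux1 (n r : ℕ) : ((r:ℝ)+1) * (n.choose (r+1)) = ((n:ℝ) - r) * n.choose r := by
  rcases lt_or_ge n (r+1) with h | h
  · rw [Nat.choose_eq_zero_of_lt h, Nat.cast_zero, mul_zero]
    rcases eq_or_lt_of_le (Nat.lt_succ_iff.mp h) with h2 | h2
    · rw [h2]; simp
    · rw [Nat.choose_eq_zero_of_lt h2, Nat.cast_zero, mul_zero]
  · have hr : r ≤ n := by omega
    have h0 := congrArg (fun m : ℕ => (m : ℝ)) (Nat.choose_succ_right_eq n r)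
    push_cast [Nat.cast_sub hr] at h0
    linarith [h0]

lemma chooseAux2 (k j : ℕ) :
    ((k:ℝ)+1) * (k.choose (j+1)) = ((k:ℝ) - j) * ((k+1).choose (j+1)) := by
  have h0 := congrArg (fun m : ℕ => (m : ℝ)) (Nat.add_one_mul_choose_eq k (j+1))
  push_cast at h0
  have h1 := chooseAux1 (k+1) (j+1)
  push_cast at h1
  linarith [h0, h1]

lemma TT_succ (k j : ℕ) : TT (k+1) (j+1) = TT k (j+1) + TT k j := by
  have h1 := Finset.sum_range_succ' (fun l => (((k+1).choose l : ℕ) : ℝ)) (j+1)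
  have h2 := Finset.sum_range_succ' (fun l => ((k.choose l : ℕ) : ℝ)) (j+1)
  unfold TT
  rw [h1, h2]
  simp only [Nat.choose_succ_succ, Nat.cast_add, Finset.sum_add_distrib,
    Nat.choose_zero_right, Nat.cast_one]
  ring

lemma TT_claim (k j : ℕ) :
    ((j:ℝ)+1) * TT (k+1) (j+1) + ((k:ℝ) - j) * TT (k+1) j = 2*((k:ℝ)+1) * TT k j := by
  induction j with
  | zero =>
    simp [TT, Finset.sum_range_succ, Finset.sum_range_one]
    push_cast
    ring
  | succ j ih =>
    have e1 : TT (k+1) (j+2) = TT (k+1) (j+1) + (((k+1).choose (j+2) : ℕ) : ℝ) := by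
      unfold TT; rw [Finset.sum_range_succ]
    have e2 : TT (k+1) (j+1) = TT (k+1) j + (((k+1).choose (j+1) : ℕ) : ℝ) := by
      unfold TT; rw [Finset.sum_range_succ]
    have e3 : TT k (j+1) = TT k j + ((k.choose (j+1) : ℕ) : ℝ) := by
      unfold TT; rw [Finset.sum_range_succ]
    have c1 := chooseAux1 (k+1) (j+1)
    have c2 := chooseAux2 k j
    push_cast at c1 c2 ⊢
    linear_combination ih + ((j:ℝ)+2)*e1 + ((k:ℝ)-(j:ℝ))*e2 - 2*((k:ℝ)+1)*e3 + c1 - 2*c2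

lemma sum_shift_eq {F G H : ℕ → ℝ} (n : ℕ) (h0 : F 0 = G 0) (hlast : F (n+1) = H n)
    (hmid : ∀ i < n, F (i+1) = G (i+1) + H i) :
    ∑ i ∈ Finset.range (n+1+1), F i
      = ∑ i ∈ Finset.range (n+1), G i + ∑ i ∈ Finset.range (n+1), H i := by
  rw [Finset.sum_range_succ' F (n+1), Finset.sum_range_succ (fun i => F (i+1)) n,
      Finset.sum_range_succ' G n, Finset.sum_range_succ H n]
  have h : ∑ i ∈ Finset.range n, F (i+1) = ∑ i ∈ Finset.range n, (G (i+1) + H i) :=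
    Finset.sum_congr rfl (fun i hi => hmid i (Finset.mem_range.mp hi))
  rw [h, Finset.sum_add_distrib, h0, hlast]
  ring

lemma fact_ne (m : ℕ) : ((m ! : ℕ) : ℝ) ≠ 0 := by
  exact_mod_cast (Nat.factorial_pos m).ne'
lemma dfact_ne (m : ℕ) : ((m‼ : ℕ) : ℝ) ≠ 0 :=
  Nat.cast_ne_zero.mpr (Nat.doubleFactorial_pos m).ne'
lemma fact1 (m : ℕ) : ((m+1)! : ℝ) = ((m:ℝ)+1) * (m ! : ℝ) := by
  rw [Nat.factorial_succ]; push_cast; ring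
lemma dfact1 (m : ℕ) : (((2*m+2)‼ : ℕ) : ℝ) = (2*(m:ℝ)+2) * (((2*m)‼ : ℕ) : ℝ) := by
  rw [Nat.doubleFactorial_add_two]; push_cast; ring

lemma L1 (n : ℕ) (x : ℝ) :
    gpe (n+1) x = (2*(n:ℝ)+1) * gpe n x + x * gp n x := by
  unfold gpe gp
  rw [Finset.mul_sum, Finset.mul_sum]
  apply sum_shift_eq
  · simp only [Nat.sub_zero, Nat.mul_zero, Nat.factorial_zero, Nat.cast_one, pow_zero]
    have e1 : ((2*(n+1))! : ℝ) = (2*(n:ℝ)+2)*(2*(n:ℝ)+1)*((2*n)! : ℝ) := by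
      rw [show 2*(n+1) = (2*n+1)+1 from by ring, fact1, fact1]; push_cast; ring
    have e2 : (((2*(n+1))‼ : ℕ) : ℝ) = (2*(n:ℝ)+2) * (((2*n)‼ : ℕ) : ℝ) := by
      rw [show 2*(n+1) = 2*n+2 from by ring, dfact1]
    rw [e1, e2]
    have h1 := dfact_ne (2*n)
    have h2 := fact_ne (2*n)
    field_simp
  · simp only [Nat.sub_self, Nat.mul_zero]
    norm_num [Nat.doubleFactorial]
    have h2 := fact_ne (2*(n+1))
    have h3 := fact_ne (2*n+1)
    rw [show 2*(n+1) = (2*n+1)+1 from by ring, pow_succ]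
    field_simp
  · intro i hi
    obtain ⟨m, rfl⟩ : ∃ m, n = i+1+m := ⟨n - (i+1), by omega⟩
    rw [show i+1+m+1 - (i+1) = m+1 from by omega, show i+1+m - (i+1) = m from by omega,
      show i+1+m - i = m+1 from by omega]
    have e1 : ((2*(i+1+m+1))! : ℝ)
        = (2*((i:ℝ)+1+m)+2)*(2*((i:ℝ)+1+m)+1)*((2*(i+1+m))! : ℝ) := by
      rw [show 2*(i+1+m+1) = (2*(i+1+m)+1)+1 from by ring, fact1, fact1]; push_cast; ring
    have e2 : (((2*(m+1))‼ : ℕ) : ℝ) = (2*(m:ℝ)+2) * (((2*m)‼ : ℕ) : ℝ) := by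
      rw [show 2*(m+1) = 2*m+2 from by ring, dfact1]
    have e3 : ((2*(i+1))! : ℝ) = (2*(i:ℝ)+2)*(2*(i:ℝ)+1)*((2*i)! : ℝ) := by
      rw [show 2*(i+1) = (2*i+1)+1 from by ring, fact1, fact1]; push_cast; ring
    have e4 : ((2*(i+1+m)+1)! : ℝ) = (2*((i:ℝ)+1+m)+1)*((2*(i+1+m))! : ℝ) := by
      rw [fact1]; push_cast; ring
    have e5 : x^(2*i+1+1) = x * x^(2*i+1) := by rw [pow_succ]; ring
    rw [e1, e2, e3, e4, show 2*(i+1) = 2*i+1+1 from by ring, e5, fact1 (2*i)]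
    have h1 := dfact_ne (2*m)
    have h2 := fact_ne (2*(i+1+m))
    have h3 := fact_ne (2*i)
    field_simp
    push_cast
    ring

lemma sum_align_eq {F G H : ℕ → ℝ} (n : ℕ) (hlast : F n = H n)
    (hmid : ∀ i < n, F i = G i + H i) :
    ∑ i ∈ Finset.range (n+1), F i
      = ∑ i ∈ Finset.range n, G i + ∑ i ∈ Finset.range (n+1), H i := by
  rw [Finset.sum_range_succ F, Finset.sum_range_succ H, hlast]
  have h : ∑ i ∈ Finset.range n, F i = ∑ i ∈ Finset.range n, (G i + H i) :=
    Finset.sum_congr rfl (fun i hi => hmid i (Finset.mem_range.mp hi))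
  rw [h, Finset.sum_add_distrib]
  ring

lemma TT_zero (k : ℕ) : TT k 0 = 1 := by simp [TT]

lemma TT_half (m : ℕ) : TT (2*m+1) m = 4^m := by
  unfold TT
  rw [show ((4:ℝ)^m) = ((4^m : ℕ) : ℝ) from by push_cast; ring,
    ← Nat.sum_range_choose_halfway m]
  push_cast
  ring

lemma L2 (n : ℕ) (x : ℝ) :
    gp (n+1) x = (2*(n:ℝ)+2) * gp n x + x * gpe (n+1) x := by
  unfold gp gpe
  rw [Finset.mul_sum, Finset.mul_sum]
  apply sum_align_eq
  · simp only [Nat.sub_self, Nat.mul_zero]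
    norm_num [Nat.doubleFactorial]
    have h1 := fact_ne (2*(n+1)+1)
    have h2 := fact_ne (2*(n+1))
    field_simp
    ring
  · intro i hi
    obtain ⟨m, rfl⟩ : ∃ m, n = i+m := ⟨n - i, by omega⟩
    rw [show i+m+1 - i = m+1 from by omega, show i+m - i = m from by omega]
    have e1 : ((2*(i+m+1)+1)! : ℝ)
        = (2*((i:ℝ)+m)+3)*(2*((i:ℝ)+m)+2)*((2*(i+m)+1)! : ℝ) := by
      rw [show 2*(i+m+1)+1 = (2*(i+m)+1+1)+1 from by ring, fact1, fact1]; push_cast; ring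
    have e2 : (((2*(m+1))‼ : ℕ) : ℝ) = (2*(m:ℝ)+2) * (((2*m)‼ : ℕ) : ℝ) := by
      rw [show 2*(m+1) = 2*m+2 from by ring, dfact1]
    have e3 : ((2*(i+m+1))! : ℝ)
        = (2*((i:ℝ)+m)+2)*((2*(i+m)+1)! : ℝ) := by
      rw [show 2*(i+m+1) = (2*(i+m)+1)+1 from by ring, fact1]; push_cast; ring
    have e4 : ((2*i+1)! : ℝ) = (2*(i:ℝ)+1)*((2*i)! : ℝ) := by
      rw [fact1]; push_cast; ring
    rw [e1, e2, e3, e4]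
    have h1 := dfact_ne (2*m)
    have h2 := fact_ne (2*(i+m)+1)
    have h3 := fact_ne (2*i)
    field_simp
    push_cast
    ring

lemma L3 (n : ℕ) (x : ℝ) :
    hpe (n+1) x = (2*(n:ℝ)+1) * hpe n x + x * hp n x := by
  rw [hp_eq]
  unfold hpe
  rw [Finset.mul_sum, Finset.mul_sum]
  apply sum_align_eq
  · rw [show n+1-1-n = 0 from by omega, show n-n = 0 from by omega,
      TT_zero, TT_zero]
    simp only [Nat.mul_zero]
    norm_num [Nat.doubleFactorial]
    have h1 := fact_ne (2*n+1)
    rw [show n+1+n = 2*n+1 from by omega, show n+n = 2*n from by omega]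
    have h1 := fact_ne (2*n+1)
    have h2 := fact_ne (2*n)
    field_simp
    ring
  · intro i hi
    obtain ⟨m, rfl⟩ : ∃ m, n = i+1+m := ⟨n - (i+1), by omega⟩
    rw [show i+1+m+1-1-i = m+1 from by omega, show i+1+m-1-i = m from by omega,
      show i+1+m-i = m+1 from by omega]
    have hts := TT_succ (2*(i+1+m)+1) m
    rw [show 2*(i+1+m+1) = 2*(i+1+m)+1+1 from by ring, hts]
    have hcl := TT_claim (2*(i+1+m)) m
    push_cast at hcl
    have h4 : TT (2*(i+1+m)) m
        = (((m:ℝ)+1) * TT (2*(i+1+m)+1) (m+1)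
          + (2*((i:ℝ)+1+m) - m) * TT (2*(i+1+m)+1) m) / (2*(2*((i:ℝ)+1+m)+1)) := by
      rw [eq_div_iff (by positivity)]
      linarith [hcl]
    rw [h4]
    have e1 : (((i+1+m+1)+i)! : ℝ) = ((i:ℝ)+1+m+1+i)*(((i+1+m)+i)! : ℝ) := by
      rw [show (i+1+m+1)+i = ((i+1+m)+i)+1 from by ring, fact1]; push_cast; ring
    have e2 : ((m+1)! : ℝ) = ((m:ℝ)+1)*(m ! : ℝ) := by rw [fact1]
    have e3 : (((2*(m+1))‼ : ℕ) : ℝ) = (2*(m:ℝ)+2) * (((2*m)‼ : ℕ) : ℝ) := by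
      rw [show 2*(m+1) = 2*m+2 from by ring, dfact1]
    have e4 : ((2*i+1)! : ℝ) = (2*(i:ℝ)+1)*((2*i)! : ℝ) := by
      rw [fact1]; push_cast; ring
    rw [e1, e2, e3, e4]
    have h1 := dfact_ne (2*m)
    have h2 := fact_ne ((i+1+m)+i)
    have h3 := fact_ne (2*i)
    have h5 := fact_ne m
    field_simp
    push_cast
    ring

lemma L4 (n : ℕ) (x : ℝ) :
    hp (n+1) x = (2*(n:ℝ)+2) * hp n x + x * hpe (n+1) x := by
  rw [hp_eq, hp_eq]
  unfold hpe
  rw [Finset.mul_sum, Finset.mul_sum]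
  apply sum_shift_eq
  · simp only [Nat.sub_zero, Nat.add_zero, Nat.mul_zero, Nat.factorial_zero, Nat.cast_one]
    rw [TT_half (n+1), TT_half n]
    have e2 : ((n+1)! : ℝ) = ((n:ℝ)+1)*(n ! : ℝ) := by rw [fact1]
    have e3 : (((2*(n+1))‼ : ℕ) : ℝ) = (2*(n:ℝ)+2) * (((2*n)‼ : ℕ) : ℝ) := by
      rw [show 2*(n+1) = 2*n+2 from by ring, dfact1]
    rw [e2, e3, pow_succ]
    have h1 := dfact_ne (2*n)
    have h2 := fact_ne n
    have h3 : ((4:ℝ)^n) ≠ 0 := by positivity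
    field_simp
    ring
  · rw [show n+1-(n+1) = 0 from by omega, show n+1-1-n = 0 from by omega, TT_zero, TT_zero,
      show n+1+(n+1) = 2*(n+1) from by omega, show n+1+n = 2*n+1 from by omega]
    simp only [Nat.mul_zero]
    norm_num [Nat.doubleFactorial]
    have h1 := fact_ne (2*(n+1))
    have h2 := fact_ne (2*n+1)
    field_simp
    ring
  · intro i hi
    obtain ⟨m, rfl⟩ : ∃ m, n = i+1+m := ⟨n - (i+1), by omega⟩
    rw [show i+1+m+1-(i+1) = m+1 from by omega, show i+1+m-(i+1) = m from by omega,
      show i+1+m+1-1-i = m+1 from by omega,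
      show 2*(i+1+m+1)+1 = (2*(i+1+m)+2)+1 from by ring,
      show 2*(i+1+m+1) = 2*(i+1+m)+2 from by ring]
    have hts := TT_succ (2*(i+1+m)+2) m
    rw [hts]
    have hcl := TT_claim (2*(i+1+m)+1) m
    rw [show 2*(i+1+m)+1+1 = 2*(i+1+m)+2 from by omega] at hcl
    push_cast at hcl
    have h4 : TT (2*(i+1+m)+1) m
        = (((m:ℝ)+1) * TT (2*(i+1+m)+2) (m+1)
          + (2*((i:ℝ)+1+m)+1 - m) * TT (2*(i+1+m)+2) m) / (2*(2*((i:ℝ)+1+m)+2)) := by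
      rw [eq_div_iff (by positivity)]
      linarith [hcl]
    rw [h4, show i+1+m+1+(i+1) = (i+1+m+1+i)+1 from by omega, fact1 (i+1+m+1+i),
      show i+1+m+(i+1) = i+1+m+1+i from by omega,
      show 2*(i+1) = (2*i+1)+1 from by omega, fact1 (2*i+1)]
    have e2 : ((m+1)! : ℝ) = ((m:ℝ)+1)*(m ! : ℝ) := by rw [fact1]
    have e3 : (((2*(m+1))‼ : ℕ) : ℝ) = (2*(m:ℝ)+2) * (((2*m)‼ : ℕ) : ℝ) := by
      rw [show 2*(m+1) = 2*m+2 from by ring, dfact1]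
    rw [e2, e3]
    have h1 := dfact_ne (2*m)
    have h2 := fact_ne (i+1+m+1+i)
    have h3 := fact_ne (2*i+1)
    have h5 := fact_ne m
    field_simp
    push_cast
    ring

lemma gp_zero (x : ℝ) : gp 0 x = x := by
  norm_num [gp, Nat.doubleFactorial]

lemma hp_zero (x : ℝ) : hp 0 x = 1 := by
  norm_num [hp, Nat.doubleFactorial]

lemma gpe_zero (x : ℝ) : gpe 0 x = 1 := by
  norm_num [gpe, Nat.doubleFactorial]

lemma hpe_zero (x : ℝ) : hpe 0 x = 0 := by
  norm_num [hpe]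

lemma Kf_zero (x : ℝ) : Kf x 0 = ∫ t in Set.Ioi x, Real.exp (-t^2/2) := by
  unfold Kf
  norm_num

lemma main_pair (x : ℝ) (n : ℕ) :
    Kf x (2*n+1) = hp n x * Real.exp (-x^2/2) - gp n x * Kf x 0 ∧
    Kf x (2*n+2) = - hpe (n+1) x * Real.exp (-x^2/2) + gpe (n+1) x * Kf x 0 := by
  induction n with
  | zero =>
    have h1 : Kf x (2*0+1) = hp 0 x * Real.exp (-x^2/2) - gp 0 x * Kf x 0 := by
      rw [show 2*0+1 = 1 from by omega, hp_zero, gp_zero, Kf_one]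
      ring
    refine ⟨h1, ?_⟩
    have st := Kf_step x 0
    rw [show (0:ℕ)+2 = 2*0+2 from by omega, show (0:ℕ)+1 = 2*0+1 from by omega] at st
    rw [st, h1, L3 0 x, L1 0 x, hpe_zero, hp_zero, gpe_zero, gp_zero]
    push_cast
    ring
  | succ n ih =>
    have st1 := Kf_step x (2*n+1)
    rw [show 2*n+1+2 = 2*(n+1)+1 from by ring, show 2*n+1+1 = 2*n+2 from by ring] at st1
    push_cast at st1
    have A : Kf x (2*(n+1)+1) = hp (n+1) x * Real.exp (-x^2/2) - gp (n+1) x * Kf x 0 := by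
      rw [st1, ih.1, ih.2, L4 n x, L2 n x]
      ring
    refine ⟨A, ?_⟩
    have st2 := Kf_step x (2*n+2)
    rw [show 2*n+2+2 = 2*(n+1)+2 from by ring, show 2*n+2+1 = 2*(n+1)+1 from by ring] at st2
    push_cast at st2
    rw [st2, A, ih.2, L3 (n+1) x, L1 (n+1) x]
    push_cast
    ring

theorem stmt4 (n : ℕ) (x : ℝ) :
    hp n x * Real.exp (-x^2/2) - gp n x * (∫ t in Set.Ioi x, Real.exp (-t^2/2))
      = ∫ t in Set.Iio (-x), (-x - t)^(2*n+1) * Real.exp (-t^2/2) := by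
  rw [J_eq_Kf x (2*n+1), (main_pair x n).1, Kf_zero]
end

section
/- For every integer n ≥ 1 and all x ∈ ℝ, the polynomial identity h_{n-1}(x) g_n(x) - g_{n-1}(x) h_n(x) = (2n-1)! · x holds. -/
open Nat Finset MeasureTheory Real

set_option maxHeartbeats 1600000

lemma f1R (a : ℕ) : (((a+1)! : ℕ) : ℝ) = ((a:ℝ)+1)*(a ! : ℝ) := by
  push_cast [Nat.factorial_succ]; ring
lemma f2R (a : ℕ) : (((a+2)! : ℕ) : ℝ) = ((a:ℝ)+2)*((a:ℝ)+1)*(a ! : ℝ) := by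
  push_cast [Nat.factorial_succ]; ring
lemma f4R (a : ℕ) : (((a+4)! : ℕ) : ℝ) = ((a:ℝ)+4)*((a:ℝ)+3)*((a:ℝ)+2)*((a:ℝ)+1)*(a ! : ℝ) := by
  push_cast [Nat.factorial_succ]; ring
lemma d2R (a : ℕ) : (((a+2)‼ : ℕ) : ℝ) = ((a:ℝ)+2)*(a‼ : ℝ) := by
  rw [Nat.doubleFactorial_add_two]; push_cast; ring
lemma d4R (a : ℕ) : (((a+4)‼ : ℕ) : ℝ) = ((a:ℝ)+4)*((a:ℝ)+2)*(a‼ : ℝ) := by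
  have h : a+4 = (a+2)+2 := by ring
  rw [h, d2R, d2R]; push_cast; ring
lemma factR_ne (a : ℕ) : ((a ! : ℕ) : ℝ) ≠ 0 := by
  exact_mod_cast (Nat.factorial_pos a).ne'
lemma dfR_ne (a : ℕ) : ((a‼ : ℕ) : ℝ) ≠ 0 := by
  exact_mod_cast (Nat.doubleFactorial_pos a).ne'

lemma decomp3 (f : ℕ → ℝ) (m : ℕ) :
    ∑ i ∈ range (m+2+1), f i = (∑ i ∈ range m, f (i+1)) + f 0 + f (m+1) + f (m+2) := by
  rw [Finset.sum_range_succ' f (m+2), Finset.sum_range_succ, Finset.sum_range_succ]; ring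
lemma decomp2b (f : ℕ → ℝ) (m : ℕ) :
    ∑ i ∈ range (m+1+1), f i = (∑ i ∈ range m, f (i+1)) + f 0 + f (m+1) := by
  rw [Finset.sum_range_succ' f (m+1), Finset.sum_range_succ]; ring
lemma decomp2t (f : ℕ → ℝ) (m : ℕ) :
    ∑ i ∈ range (m+1+1), f i = (∑ i ∈ range m, f i) + f m + f (m+1) := by
  rw [Finset.sum_range_succ, Finset.sum_range_succ]
lemma decomp1 (f : ℕ → ℝ) (m : ℕ) :
    ∑ i ∈ range (m+1), f i = (∑ i ∈ range m, f (i+1)) + f 0 :=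
  Finset.sum_range_succ' f m

lemma choose_up (n j : ℕ) : ((n+1)-j) * (n+1).choose j = (n+1) * n.choose j := by
  calc ((n+1)-j) * (n+1).choose j = (n+1).choose j * ((n+1)-j) := Nat.mul_comm _ _
    _ = (n+1).choose (j+1) * (j+1) := (Nat.choose_succ_right_eq (n+1) j).symm
    _ = Nat.succ n * n.choose j := (Nat.add_one_mul_choose_eq n j).symm
    _ = (n+1) * n.choose j := rfl

lemma SbS (n m : ℕ) : (∑ j ∈ Finset.range (m+2), ((2*(n+1)+1).choose j : ℝ))
    = 2*(∑ j ∈ Finset.range (m+1), ((2*n+1).choose j : ℝ))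
      + 2*(∑ j ∈ Finset.range (m+2), ((2*n+1).choose j : ℝ))
      - ((2*n+1).choose m : ℝ) - ((2*n+1).choose (m+1) : ℝ) := by
  induction m with
  | zero =>
    simp [Finset.sum_range_succ, Nat.choose_one_right]
    ring
  | succ m ih =>
    rw [show m+2 = m+1+1 by ring] at ih
    have hP : (((2*(n+1)+1).choose (m+1+1) : ℕ) : ℝ)
        = ((2*n+1).choose m : ℝ) + 2*((2*n+1).choose (m+1) : ℝ) + ((2*n+1).choose (m+1+1) : ℝ) := by
      rw [show 2*(n+1)+1 = (2*n+1)+1+1 by ring, Nat.choose_succ_succ ((2*n+1)+1) (m+1),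
          Nat.choose_succ_succ (2*n+1) m, Nat.choose_succ_succ (2*n+1) (m+1)]
      push_cast; ring
    have hQ : (∑ j ∈ Finset.range (m+1+1), ((2*n+1).choose j : ℝ))
        = (∑ j ∈ Finset.range (m+1), ((2*n+1).choose j : ℝ)) + ((2*n+1).choose (m+1) : ℝ) :=
      Finset.sum_range_succ _ (m+1)
    rw [show m+1+2 = (m+1+1)+1 by ring,
        Finset.sum_range_succ (fun j => (((2*(n+1)+1).choose j : ℕ) : ℝ)) (m+1+1),
        Finset.sum_range_succ (fun j => (((2*n+1).choose j : ℕ) : ℝ)) (m+1+1)]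
    linear_combination ih + hP - 2*hQ


lemma gpoint (m i : ℕ) (h : i < m) (x : ℝ) :
    ((2*(m+2)+1)! : ℝ) / ((2*(m+2-(i+1)))‼ * (2*(i+1)+1)!) * x^(2*(i+1)+1)
    = x^2 * (((2*(m+1)+1)! : ℝ) / ((2*(m+1-i))‼ * (2*i+1)!) * x^(2*i+1))
      + (4*(m:ℝ)+7) * (((2*(m+1)+1)! : ℝ) / ((2*(m+1-(i+1)))‼ * (2*(i+1)+1)!) * x^(2*(i+1)+1))
      - ((2*(m:ℝ)+3)*(2*(m:ℝ)+2)) * (((2*m+1)! : ℝ) / ((2*(m-(i+1)))‼ * (2*(i+1)+1)!) * x^(2*(i+1)+1)) := by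
  obtain ⟨k, rfl⟩ : ∃ k, m = i+1+k := ⟨m-(i+1), by omega⟩
  have A4 : ((((2*(i+1+k)+1)+4)! : ℕ) : ℝ)
      = (2*(i:ℝ)+2*k+7)*(2*(i:ℝ)+2*k+6)*(2*(i:ℝ)+2*k+5)*(2*(i:ℝ)+2*k+4)*(((2*(i+1+k)+1)! : ℕ) : ℝ) := by
    rw [f4R]; push_cast; ring
  have A2 : ((((2*(i+1+k)+1)+2)! : ℕ) : ℝ)
      = (2*(i:ℝ)+2*k+5)*(2*(i:ℝ)+2*k+4)*(((2*(i+1+k)+1)! : ℕ) : ℝ) := by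
    rw [f2R]; push_cast; ring
  have B2 : ((((2*i+1)+2)! : ℕ) : ℝ) = (2*(i:ℝ)+3)*(2*(i:ℝ)+2)*(((2*i+1)! : ℕ) : ℝ) := by
    rw [f2R]; push_cast; ring
  have D4 : (((2*k+4)‼ : ℕ) : ℝ) = (2*(k:ℝ)+4)*(2*(k:ℝ)+2)*(((2*k)‼ : ℕ) : ℝ) := by
    rw [d4R]; push_cast; ring
  have D2 : (((2*k+2)‼ : ℕ) : ℝ) = (2*(k:ℝ)+2)*(((2*k)‼ : ℕ) : ℝ) := by
    rw [d2R]; push_cast; ring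
  rw [show i+1+k+2-(i+1) = k+2 by omega, show i+1+k+1-i = k+2 by omega,
      show i+1+k+1-(i+1) = k+1 by omega, show i+1+k-(i+1) = k by omega,
      show 2*(i+1+k+2)+1 = (2*(i+1+k)+1)+4 by ring, A4,
      show 2*(i+1+k+1)+1 = (2*(i+1+k)+1)+2 by ring, A2,
      show 2*(k+2) = 2*k+4 by ring, D4,
      show 2*(k+1) = 2*k+2 by ring, D2,
      show 2*(i+1)+1 = (2*i+1)+2 by ring, B2]
  have p1 : (((2*k)‼ : ℕ) : ℝ) ≠ 0 := dfR_ne _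
  have p2 : (((2*i+1)! : ℕ) : ℝ) ≠ 0 := factR_ne _
  have q1 : (2*(k:ℝ)+4) ≠ 0 := by positivity
  have q2 : (2*(k:ℝ)+2) ≠ 0 := by positivity
  have q3 : (2*(i:ℝ)+3) ≠ 0 := by positivity
  have q4 : (2*(i:ℝ)+2) ≠ 0 := by positivity
  push_cast
  field_simp
  ring

lemma grec (m : ℕ) (x : ℝ) :
    gp (m+2) x = (x^2 + (4*(m:ℝ)+7)) * gp (m+1) x
      - ((2*(m:ℝ)+3)*(2*(m:ℝ)+2)) * gp m x := by
  unfold gp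
  rw [add_mul, Finset.mul_sum, Finset.mul_sum, Finset.mul_sum]
  rw [decomp3, decomp2t, decomp2b, decomp1]
  have main : (∑ i ∈ range m,
        ((2*(m+2)+1)! : ℝ) / ((2*(m+2-(i+1)))‼ * (2*(i+1)+1)!) * x^(2*(i+1)+1))
      = ∑ i ∈ range m,
        (x^2 * (((2*(m+1)+1)! : ℝ) / ((2*(m+1-i))‼ * (2*i+1)!) * x^(2*i+1))
        + (4*(m:ℝ)+7) * (((2*(m+1)+1)! : ℝ) / ((2*(m+1-(i+1)))‼ * (2*(i+1)+1)!) * x^(2*(i+1)+1))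
        - ((2*(m:ℝ)+3)*(2*(m:ℝ)+2)) * (((2*m+1)! : ℝ) / ((2*(m-(i+1)))‼ * (2*(i+1)+1)!) * x^(2*(i+1)+1))) :=
    Finset.sum_congr rfl fun i hi => gpoint m i (mem_range.mp hi) x
  rw [Finset.sum_sub_distrib, Finset.sum_add_distrib] at main
  have e2 : ((2*(m+2)+1)! : ℝ) / ((2*(m+2-(m+2)))‼ * (2*(m+2)+1)!) * x^(2*(m+2)+1)
      = x^2 * (((2*(m+1)+1)! : ℝ) / ((2*(m+1-(m+1)))‼ * (2*(m+1)+1)!) * x^(2*(m+1)+1)) := by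
    rw [Nat.sub_self, Nat.sub_self]
    norm_num [Nat.doubleFactorial]
    rw [div_self (factR_ne _), div_self (factR_ne _)]
    ring
  have e1 : ((2*(m+2)+1)! : ℝ) / ((2*(m+2-(m+1)))‼ * (2*(m+1)+1)!) * x^(2*(m+1)+1)
      = x^2 * (((2*(m+1)+1)! : ℝ) / ((2*(m+1-m))‼ * (2*m+1)!) * x^(2*m+1))
        + (4*(m:ℝ)+7) * (((2*(m+1)+1)! : ℝ) / ((2*(m+1-(m+1)))‼ * (2*(m+1)+1)!) * x^(2*(m+1)+1)) := by
    rw [show m+2-(m+1) = 1 by omega, show m+1-m = 1 by omega, Nat.sub_self]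
    have A2 : ((((2*m+1)+2)! : ℕ) : ℝ) = (2*(m:ℝ)+3)*(2*(m:ℝ)+2)*(((2*m+1)! : ℕ) : ℝ) := by
      rw [f2R]; push_cast; ring
    have A4 : ((((2*m+1)+4)! : ℕ) : ℝ)
        = (2*(m:ℝ)+5)*(2*(m:ℝ)+4)*(2*(m:ℝ)+3)*(2*(m:ℝ)+2)*(((2*m+1)! : ℕ) : ℝ) := by
      rw [f4R]; push_cast; ring
    rw [show 2*(m+2)+1 = (2*m+1)+4 by ring, A4, show 2*(m+1)+1 = (2*m+1)+2 by ring, A2]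
    have p2 : (((2*m+1)! : ℕ) : ℝ) ≠ 0 := factR_ne _
    norm_num [Nat.doubleFactorial]
    field_simp
    ring
  have e0 : ((2*(m+2)+1)! : ℝ) / ((2*(m+2-0))‼ * (2*0+1)!) * x^(2*0+1)
      = (4*(m:ℝ)+7) * (((2*(m+1)+1)! : ℝ) / ((2*(m+1-0))‼ * (2*0+1)!) * x^(2*0+1))
        - ((2*(m:ℝ)+3)*(2*(m:ℝ)+2)) * (((2*m+1)! : ℝ) / ((2*(m-0))‼ * (2*0+1)!) * x^(2*0+1)) := by
    rw [Nat.sub_zero, Nat.sub_zero, Nat.sub_zero]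
    have A2 : ((((2*m+1)+2)! : ℕ) : ℝ) = (2*(m:ℝ)+3)*(2*(m:ℝ)+2)*(((2*m+1)! : ℕ) : ℝ) := by
      rw [f2R]; push_cast; ring
    have A4 : ((((2*m+1)+4)! : ℕ) : ℝ)
        = (2*(m:ℝ)+5)*(2*(m:ℝ)+4)*(2*(m:ℝ)+3)*(2*(m:ℝ)+2)*(((2*m+1)! : ℕ) : ℝ) := by
      rw [f4R]; push_cast; ring
    have D4 : (((2*m+4)‼ : ℕ) : ℝ) = (2*(m:ℝ)+4)*(2*(m:ℝ)+2)*(((2*m)‼ : ℕ) : ℝ) := by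
      rw [d4R]; push_cast; ring
    have D2 : (((2*m+2)‼ : ℕ) : ℝ) = (2*(m:ℝ)+2)*(((2*m)‼ : ℕ) : ℝ) := by
      rw [d2R]; push_cast; ring
    rw [show 2*(m+2)+1 = (2*m+1)+4 by ring, A4, show 2*(m+1)+1 = (2*m+1)+2 by ring, A2,
        show 2*(m+2) = 2*m+4 by ring, D4, show 2*(m+1) = 2*m+2 by ring, D2]
    have p1 : (((2*m)‼ : ℕ) : ℝ) ≠ 0 := dfR_ne _
    have p2 : (((2*m+1)! : ℕ) : ℝ) ≠ 0 := factR_ne _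
    have q1 : (2*(m:ℝ)+4) ≠ 0 := by positivity
    have q2 : (2*(m:ℝ)+2) ≠ 0 := by positivity
    field_simp
    ring
  linear_combination main + e0 + e1 + e2
lemma keyh (i k S A0 A1 A2 B0 B1 C1 C2 : ℝ)
    (hk1 : (k+1) ≠ 0) (hk2 : (k+2) ≠ 0)
    (h2 : (2*i+k+2) ≠ 0) (h3 : (2*i+k+3) ≠ 0) (h4 : (2*i+k+4) ≠ 0)
    (rA1 : A1*(k+1) = A0*(2*i+k+3))
    (rA2 : A2*(k+2) = A1*(2*i+k+2))
    (rC1 : (2*i+k+3)*C1 = (2*i+2*k+4)*A1)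
    (rC2 : (2*i+k+2)*C2 = (2*i+2*k+4)*A2)
    (rB0 : (2*i+k+4)*B0 = (2*i+2*k+5)*C1)
    (rB1 : (2*i+k+3)*B1 = (2*i+2*k+5)*C2) :
    (2*i+k+4)*(2*i+k+3)*(k+2)*(k+1)*(16*S+8*A1+2*A2-2*A0-B0-B1)
    = (2*i+2)*(2*i+1)*(k+2)*(k+1)*(4*S+3*A1+A2)
      + (4*(i+1+k)+7)*(2*k+4)*(2*i+k+3)*(k+1)*(4*S+A1-A0)
      - (2*(i+1+k)+3)*(2*(i+1+k)+2)*(2*k+4)*(2*k+2)*S := by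
  have eA1 : A1 = A0*(2*i+k+3)/(k+1) := by
    rw [eq_div_iff hk1]; linear_combination rA1
  have eA2 : A2 = A1*(2*i+k+2)/(k+2) := by
    rw [eq_div_iff hk2]; linear_combination rA2
  have eC1 : C1 = (2*i+2*k+4)*A1/(2*i+k+3) := by
    rw [eq_div_iff h3]; linear_combination rC1
  have eC2 : C2 = (2*i+2*k+4)*A2/(2*i+k+2) := by
    rw [eq_div_iff h2]; linear_combination rC2
  have eB0 : B0 = (2*i+2*k+5)*C1/(2*i+k+4) := by
    rw [eq_div_iff h4]; linear_combination rB0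
  have eB1 : B1 = (2*i+2*k+5)*C2/(2*i+k+3) := by
    rw [eq_div_iff h3]; linear_combination rB1
  rw [eB0, eB1, eC1, eC2, eA2, eA1]
  field_simp
  ring

lemma hpoint (m i : ℕ) (h : i < m) (x : ℝ) :
    ((m+2+(i+1))! * (m+2-(i+1))! : ℝ) / ((2*(m+2-(i+1)))‼ * (2*(i+1))!) *
      (∑ j ∈ Finset.range (m+2-(i+1)+1), ((2*(m+2)+1).choose j : ℝ)) * x^(2*(i+1))
    = x^2 * (((m+1+i)! * (m+1-i)! : ℝ) / ((2*(m+1-i))‼ * (2*i)!) *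
        (∑ j ∈ Finset.range (m+1-i+1), ((2*(m+1)+1).choose j : ℝ)) * x^(2*i))
      + (4*(m:ℝ)+7) * (((m+1+(i+1))! * (m+1-(i+1))! : ℝ) / ((2*(m+1-(i+1)))‼ * (2*(i+1))!) *
        (∑ j ∈ Finset.range (m+1-(i+1)+1), ((2*(m+1)+1).choose j : ℝ)) * x^(2*(i+1)))
      - ((2*(m:ℝ)+3)*(2*(m:ℝ)+2)) * (((m+(i+1))! * (m-(i+1))! : ℝ) / ((2*(m-(i+1)))‼ * (2*(i+1))!) *
        (∑ j ∈ Finset.range (m-(i+1)+1), ((2*m+1).choose j : ℝ)) * x^(2*(i+1))) := by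
  obtain ⟨k, rfl⟩ : ∃ k, m = i+1+k := ⟨m-(i+1), by omega⟩
  rw [show i+1+k+2-(i+1) = k+2 by omega, show i+1+k+1-i = k+2 by omega,
      show i+1+k+1-(i+1) = k+1 by omega, show i+1+k-(i+1) = k by omega,
      show k+2+1 = k+3 by ring, show k+1+1 = k+2 by ring]
  -- normalize tops inside binders
  simp only [show 2*(i+1+k+2)+1 = 2*(i+1+k+1+1)+1 by ring]
  -- sum expansions
  have hV := SbS (i+1+k+1) (k+1)
  rw [show k+1+2 = k+3 by ring, show k+1+1 = k+2 by ring] at hV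
  have hW2 := SbS (i+1+k) (k+1)
  rw [show k+1+2 = k+3 by ring, show k+1+1 = k+2 by ring,
      show 2*(i+1+k+1)+1 = 2*(i+1+k+1)+1 by ring] at hW2
  have hW1 := SbS (i+1+k) k
  have hS2 := Finset.sum_range_succ (fun j => (((2*(i+1+k)+1).choose j : ℕ) : ℝ)) (k+2)
  rw [show k+2+1 = k+3 by ring] at hS2
  have hS1 := Finset.sum_range_succ (fun j => (((2*(i+1+k)+1).choose j : ℕ) : ℝ)) (k+1)
  rw [show k+1+1 = k+2 by ring] at hS1
  -- goal tops: after simp only, the V-sum top is 2*(i+1+k+1+1)+1; SbS (i+1+k+1) gives 2*(i+1+k+1+1)+1  ✓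
  -- nat ratio facts
  have n1 := Nat.choose_succ_right_eq (2*(i+1+k)+1) k
  rw [show 2*(i+1+k)+1-k = 2*i+k+3 by omega] at n1
  have n2 := Nat.choose_succ_right_eq (2*(i+1+k)+1) (k+1)
  rw [show 2*(i+1+k)+1-(k+1) = 2*i+k+2 by omega, show k+1+1 = k+2 by ring] at n2
  have n3 := choose_up (2*(i+1+k)+1) (k+1)
  rw [show 2*(i+1+k)+1+1-(k+1) = 2*i+k+3 by omega, show 2*(i+1+k)+1+1 = 2*(i+1+k)+2 by ring] at n3
  have n4 := choose_up (2*(i+1+k)+1) (k+2)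
  rw [show 2*(i+1+k)+1+1-(k+2) = 2*i+k+2 by omega, show 2*(i+1+k)+1+1 = 2*(i+1+k)+2 by ring] at n4
  have n5 := choose_up (2*(i+1+k)+2) (k+1)
  rw [show 2*(i+1+k)+2+1-(k+1) = 2*i+k+4 by omega, show 2*(i+1+k)+2+1 = 2*(i+1+k+1)+1 by ring] at n5
  have n6 := choose_up (2*(i+1+k)+2) (k+2)
  rw [show 2*(i+1+k)+2+1-(k+2) = 2*i+k+3 by omega, show 2*(i+1+k)+2+1 = 2*(i+1+k+1)+1 by ring] at n6
  have rA1 : (((2*(i+1+k)+1).choose (k+1) : ℕ) : ℝ)*((k:ℝ)+1)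
      = (((2*(i+1+k)+1).choose k : ℕ) : ℝ)*(2*(i:ℝ)+(k:ℝ)+3) := by exact_mod_cast n1
  have rA2 : (((2*(i+1+k)+1).choose (k+2) : ℕ) : ℝ)*((k:ℝ)+2)
      = (((2*(i+1+k)+1).choose (k+1) : ℕ) : ℝ)*(2*(i:ℝ)+(k:ℝ)+2) := by exact_mod_cast n2
  have rC1 : (2*(i:ℝ)+(k:ℝ)+3)*(((2*(i+1+k)+2).choose (k+1) : ℕ) : ℝ)
      = (2*(i:ℝ)+2*(k:ℝ)+4)*(((2*(i+1+k)+1).choose (k+1) : ℕ) : ℝ) := by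
    have : ((((2*i+k+3) * (2*(i+1+k)+2).choose (k+1) : ℕ)) : ℝ)
        = (((2*(i+1+k)+2) * (2*(i+1+k)+1).choose (k+1) : ℕ) : ℝ) := by exact_mod_cast n3
    push_cast at this; linear_combination this
  have rC2 : (2*(i:ℝ)+(k:ℝ)+2)*(((2*(i+1+k)+2).choose (k+2) : ℕ) : ℝ)
      = (2*(i:ℝ)+2*(k:ℝ)+4)*(((2*(i+1+k)+1).choose (k+2) : ℕ) : ℝ) := by
    have : ((((2*i+k+2) * (2*(i+1+k)+2).choose (k+2) : ℕ)) : ℝ)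
        = (((2*(i+1+k)+2) * (2*(i+1+k)+1).choose (k+2) : ℕ) : ℝ) := by exact_mod_cast n4
    push_cast at this; linear_combination this
  have rB0 : (2*(i:ℝ)+(k:ℝ)+4)*(((2*(i+1+k+1)+1).choose (k+1) : ℕ) : ℝ)
      = (2*(i:ℝ)+2*(k:ℝ)+5)*(((2*(i+1+k)+2).choose (k+1) : ℕ) : ℝ) := by
    have : ((((2*i+k+4) * (2*(i+1+k+1)+1).choose (k+1) : ℕ)) : ℝ)
        = (((2*(i+1+k+1)+1) * (2*(i+1+k)+2).choose (k+1) : ℕ) : ℝ) := by exact_mod_cast n5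
    push_cast at this; linear_combination this
  have rB1 : (2*(i:ℝ)+(k:ℝ)+3)*(((2*(i+1+k+1)+1).choose (k+2) : ℕ) : ℝ)
      = (2*(i:ℝ)+2*(k:ℝ)+5)*(((2*(i+1+k)+2).choose (k+2) : ℕ) : ℝ) := by
    have : ((((2*i+k+3) * (2*(i+1+k+1)+1).choose (k+2) : ℕ)) : ℝ)
        = (((2*(i+1+k+1)+1) * (2*(i+1+k)+2).choose (k+2) : ℕ) : ℝ) := by exact_mod_cast n6
    push_cast at this; linear_combination this
  -- factorial expansions
  have F1 : ((((2*i+k+2)+2)! : ℕ) : ℝ) = (2*(i:ℝ)+(k:ℝ)+4)*(2*(i:ℝ)+(k:ℝ)+3)*(((2*i+k+2)! : ℕ) : ℝ) := by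
    rw [f2R]; push_cast; ring
  have F2 : ((((2*i+k+2)+1)! : ℕ) : ℝ) = (2*(i:ℝ)+(k:ℝ)+3)*(((2*i+k+2)! : ℕ) : ℝ) := by
    rw [f1R]; push_cast; ring
  have F5 : ((((2*i)+2)! : ℕ) : ℝ) = (2*(i:ℝ)+2)*(2*(i:ℝ)+1)*(((2*i)! : ℕ) : ℝ) := by
    rw [f2R]; push_cast; ring
  have D4 : (((2*k+4)‼ : ℕ) : ℝ) = (2*(k:ℝ)+4)*(2*(k:ℝ)+2)*(((2*k)‼ : ℕ) : ℝ) := by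
    rw [d4R]; push_cast; ring
  have D2 : (((2*k+2)‼ : ℕ) : ℝ) = (2*(k:ℝ)+2)*(((2*k)‼ : ℕ) : ℝ) := by
    rw [d2R]; push_cast; ring
  have qq1 : ((k:ℝ)+1) ≠ 0 := by positivity
  have qq2 : ((k:ℝ)+2) ≠ 0 := by positivity
  have qq3 : (2*(i:ℝ)+(k:ℝ)+2) ≠ 0 := by positivity
  have qq4 : (2*(i:ℝ)+(k:ℝ)+3) ≠ 0 := by positivity
  have qq5 : (2*(i:ℝ)+(k:ℝ)+4) ≠ 0 := by positivity
  set u : ℝ := (((2*i+k+2)! : ℕ) : ℝ) * ((k ! : ℕ) : ℝ) * x^(2*i+2)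
      / ((2*(k:ℝ)+4)*(2*(k:ℝ)+2)*(((2*k)‼ : ℕ) : ℝ)*(2*(i:ℝ)+2)*(2*(i:ℝ)+1)*(((2*i)! : ℕ) : ℝ)) with hu
  have p1 : (((2*k)‼ : ℕ) : ℝ) ≠ 0 := dfR_ne _
  have p2 : (((2*i)! : ℕ) : ℝ) ≠ 0 := factR_ne _
  have q6 : (2*(k:ℝ)+4) ≠ 0 := by positivity
  have q7 : (2*(k:ℝ)+2) ≠ 0 := by positivity
  have q8 : (2*(i:ℝ)+2) ≠ 0 := by positivity
  have q9 : (2*(i:ℝ)+1) ≠ 0 := by positivity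
  have t1 : ((i+1+k+2+(i+1))! * (k+2)! : ℝ) / ((2*(k+2))‼ * (2*(i+1))!) *
        (∑ j ∈ Finset.range (k+3), ((2*(i+1+k+1+1)+1).choose j : ℝ)) * x^(2*(i+1))
      = u * ((2*(i:ℝ)+(k:ℝ)+4)*(2*(i:ℝ)+(k:ℝ)+3)*((k:ℝ)+2)*((k:ℝ)+1)) *
        (∑ j ∈ Finset.range (k+3), ((2*(i+1+k+1+1)+1).choose j : ℝ)) := by
    rw [hu, show i+1+k+2+(i+1) = (2*i+k+2)+2 by ring, F1,
        show 2*(k+2) = 2*k+4 by ring, D4, show 2*(i+1) = (2*i)+2 by ring, F5, f2R k]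
    field_simp
  have t2 : x^2 * (((i+1+k+1+i)! * (k+2)! : ℝ) / ((2*(k+2))‼ * (2*i)!) *
        (∑ j ∈ Finset.range (k+3), ((2*(i+1+k+1)+1).choose j : ℝ)) * x^(2*i))
      = u * ((2*(i:ℝ)+2)*(2*(i:ℝ)+1)*((k:ℝ)+2)*((k:ℝ)+1)) *
        (∑ j ∈ Finset.range (k+3), ((2*(i+1+k+1)+1).choose j : ℝ)) := by
    rw [hu, show i+1+k+1+i = 2*i+k+2 by ring,
        show 2*(k+2) = 2*k+4 by ring, D4, f2R k]
    field_simp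
    ring
  have t3 : (4*((i+1+k : ℕ):ℝ)+7) * (((i+1+k+1+(i+1))! * (k+1)! : ℝ) / ((2*(k+1))‼ * (2*(i+1))!) *
        (∑ j ∈ Finset.range (k+2), ((2*(i+1+k+1)+1).choose j : ℝ)) * x^(2*(i+1)))
      = u * ((4*((i:ℝ)+1+(k:ℝ))+7)*(2*(k:ℝ)+4)*(2*(i:ℝ)+(k:ℝ)+3)*((k:ℝ)+1)) *
        (∑ j ∈ Finset.range (k+2), ((2*(i+1+k+1)+1).choose j : ℝ)) := by
    rw [hu, show i+1+k+1+(i+1) = (2*i+k+2)+1 by ring, F2,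
        show 2*(k+1) = 2*k+2 by ring, D2, show 2*(i+1) = (2*i)+2 by ring, F5, f1R k]
    push_cast
    field_simp
  have t4 : ((2*((i+1+k : ℕ):ℝ)+3)*(2*((i+1+k : ℕ):ℝ)+2)) * (((i+1+k+(i+1))! * k ! : ℝ) / ((2*k)‼ * (2*(i+1))!) *
        (∑ j ∈ Finset.range (k+1), ((2*(i+1+k)+1).choose j : ℝ)) * x^(2*(i+1)))
      = u * ((2*((i:ℝ)+1+(k:ℝ))+3)*(2*((i:ℝ)+1+(k:ℝ))+2)*(2*(k:ℝ)+4)*(2*(k:ℝ)+2)) *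
        (∑ j ∈ Finset.range (k+1), ((2*(i+1+k)+1).choose j : ℝ)) := by
    rw [hu, show i+1+k+(i+1) = 2*i+k+2 by ring,
        show 2*(i+1) = (2*i)+2 by ring, F5]
    push_cast
    field_simp
  rw [t1, t2, t3, t4, hV, hW2, hW1, hS2, hS1]
  linear_combination u
    * keyh (i:ℝ) (k:ℝ)
        (∑ j ∈ Finset.range (k+1), (((2*(i+1+k)+1).choose j : ℕ) : ℝ))
        (((2*(i+1+k)+1).choose k : ℕ) : ℝ)
        (((2*(i+1+k)+1).choose (k+1) : ℕ) : ℝ)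
        (((2*(i+1+k)+1).choose (k+2) : ℕ) : ℝ)
        (((2*(i+1+k+1)+1).choose (k+1) : ℕ) : ℝ)
        (((2*(i+1+k+1)+1).choose (k+2) : ℕ) : ℝ)
        (((2*(i+1+k)+2).choose (k+1) : ℕ) : ℝ)
        (((2*(i+1+k)+2).choose (k+2) : ℕ) : ℝ)
        qq1 qq2 qq3 qq4 qq5 rA1 rA2 rC1 rC2 rB0 rB1

lemma hrec (m : ℕ) (x : ℝ) :
    hp (m+2) x = (x^2 + (4*(m:ℝ)+7)) * hp (m+1) x
      - ((2*(m:ℝ)+3)*(2*(m:ℝ)+2)) * hp m x := by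
  unfold hp
  rw [add_mul, Finset.mul_sum, Finset.mul_sum, Finset.mul_sum]
  rw [decomp3, decomp2t, decomp2b,
      decomp1 (fun i => ((2*(m:ℝ)+3)*(2*(m:ℝ)+2)) * (((m+i)! * (m-i)! : ℝ) / ((2*(m-i))‼ * (2*i)!) *
        (∑ j ∈ Finset.range (m-i+1), ((2*m+1).choose j : ℝ)) * x^(2*i))) m]
  have main : (∑ i ∈ range m,
        ((m+2+(i+1))! * (m+2-(i+1))! : ℝ) / ((2*(m+2-(i+1)))‼ * (2*(i+1))!) *
          (∑ j ∈ Finset.range (m+2-(i+1)+1), ((2*(m+2)+1).choose j : ℝ)) * x^(2*(i+1)))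
      = ∑ i ∈ range m,
        (x^2 * (((m+1+i)! * (m+1-i)! : ℝ) / ((2*(m+1-i))‼ * (2*i)!) *
            (∑ j ∈ Finset.range (m+1-i+1), ((2*(m+1)+1).choose j : ℝ)) * x^(2*i))
          + (4*(m:ℝ)+7) * (((m+1+(i+1))! * (m+1-(i+1))! : ℝ) / ((2*(m+1-(i+1)))‼ * (2*(i+1))!) *
            (∑ j ∈ Finset.range (m+1-(i+1)+1), ((2*(m+1)+1).choose j : ℝ)) * x^(2*(i+1)))
          - ((2*(m:ℝ)+3)*(2*(m:ℝ)+2)) * (((m+(i+1))! * (m-(i+1))! : ℝ) / ((2*(m-(i+1)))‼ * (2*(i+1))!) *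
            (∑ j ∈ Finset.range (m-(i+1)+1), ((2*m+1).choose j : ℝ)) * x^(2*(i+1)))) :=
    Finset.sum_congr rfl fun i hi => hpoint m i (mem_range.mp hi) x
  rw [Finset.sum_sub_distrib, Finset.sum_add_distrib] at main
  have e2 : ((m+2+(m+2))! * (m+2-(m+2))! : ℝ) / ((2*(m+2-(m+2)))‼ * (2*(m+2))!) *
        (∑ j ∈ Finset.range (m+2-(m+2)+1), ((2*(m+2)+1).choose j : ℝ)) * x^(2*(m+2))
      = x^2 * (((m+1+(m+1))! * (m+1-(m+1))! : ℝ) / ((2*(m+1-(m+1)))‼ * (2*(m+1))!) *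
        (∑ j ∈ Finset.range (m+1-(m+1)+1), ((2*(m+1)+1).choose j : ℝ)) * x^(2*(m+1))) := by
    rw [Nat.sub_self, Nat.sub_self, show m+2+(m+2) = 2*(m+2) by ring, show m+1+(m+1) = 2*(m+1) by ring]
    norm_num [Nat.doubleFactorial]
    rw [div_self (factR_ne _), div_self (factR_ne _)]
    ring
  have e1 : ((m+2+(m+1))! * (m+2-(m+1))! : ℝ) / ((2*(m+2-(m+1)))‼ * (2*(m+1))!) *
        (∑ j ∈ Finset.range (m+2-(m+1)+1), ((2*(m+2)+1).choose j : ℝ)) * x^(2*(m+1))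
      = x^2 * (((m+1+m)! * (m+1-m)! : ℝ) / ((2*(m+1-m))‼ * (2*m)!) *
          (∑ j ∈ Finset.range (m+1-m+1), ((2*(m+1)+1).choose j : ℝ)) * x^(2*m))
        + (4*(m:ℝ)+7) * (((m+1+(m+1))! * (m+1-(m+1))! : ℝ) / ((2*(m+1-(m+1)))‼ * (2*(m+1))!) *
          (∑ j ∈ Finset.range (m+1-(m+1)+1), ((2*(m+1)+1).choose j : ℝ)) * x^(2*(m+1))) := by
    rw [show m+2-(m+1) = 1 by omega, show m+1-m = 1 by omega, Nat.sub_self]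
    have s1 : (∑ j ∈ Finset.range (1+1), ((2*(m+2)+1).choose j : ℝ)) = 2*(m:ℝ)+6 := by
      rw [Finset.sum_range_succ, Finset.sum_range_one, Nat.choose_zero_right, Nat.choose_one_right]
      push_cast; ring
    have s2 : (∑ j ∈ Finset.range (1+1), ((2*(m+1)+1).choose j : ℝ)) = 2*(m:ℝ)+4 := by
      rw [Finset.sum_range_succ, Finset.sum_range_one, Nat.choose_zero_right, Nat.choose_one_right]
      push_cast; ring
    have s3 : (∑ j ∈ Finset.range (0+1), ((2*(m+1)+1).choose j : ℝ)) = 1 := by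
      rw [Finset.sum_range_one, Nat.choose_zero_right]; norm_num
    rw [s1, s2, s3]
    have F1 : ((((2*m)+3)! : ℕ) : ℝ) = (2*(m:ℝ)+3)*(2*(m:ℝ)+2)*(2*(m:ℝ)+1)*(((2*m)! : ℕ) : ℝ) := by
      rw [show (2*m)+3 = (2*m)+1+2 by ring, f2R, f1R]; push_cast; ring
    have F2 : ((((2*m)+2)! : ℕ) : ℝ) = (2*(m:ℝ)+2)*(2*(m:ℝ)+1)*(((2*m)! : ℕ) : ℝ) := by
      rw [f2R]; push_cast; ring
    have F3 : ((((2*m)+1)! : ℕ) : ℝ) = (2*(m:ℝ)+1)*(((2*m)! : ℕ) : ℝ) := by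
      rw [f1R]; push_cast; ring
    rw [show m+2+(m+1) = (2*m)+3 by ring, F1, show m+1+m = (2*m)+1 by ring, F3,
        show m+1+(m+1) = (2*m)+2 by ring, F2, show 2*(m+1) = (2*m)+2 by ring, F2]
    have p1 : (((2*m)! : ℕ) : ℝ) ≠ 0 := factR_ne _
    have q1 : (2*(m:ℝ)+2) ≠ 0 := by positivity
    have q2 : (2*(m:ℝ)+1) ≠ 0 := by positivity
    norm_num [Nat.doubleFactorial]
    field_simp
    ring
  have e0 : ((m+2+0)! * (m+2-0)! : ℝ) / ((2*(m+2-0))‼ * (2*0)!) *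
        (∑ j ∈ Finset.range (m+2-0+1), ((2*(m+2)+1).choose j : ℝ)) * x^(2*0)
      = (4*(m:ℝ)+7) * (((m+1+0)! * (m+1-0)! : ℝ) / ((2*(m+1-0))‼ * (2*0)!) *
          (∑ j ∈ Finset.range (m+1-0+1), ((2*(m+1)+1).choose j : ℝ)) * x^(2*0))
        - ((2*(m:ℝ)+3)*(2*(m:ℝ)+2)) * (((m+0)! * (m-0)! : ℝ) / ((2*(m-0))‼ * (2*0)!) *
          (∑ j ∈ Finset.range (m-0+1), ((2*m+1).choose j : ℝ)) * x^(2*0)) := by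
    rw [Nat.sub_zero, Nat.sub_zero, Nat.sub_zero, Nat.add_zero, Nat.add_zero, Nat.add_zero]
    have s0 : (∑ j ∈ Finset.range (m+1), ((2*m+1).choose j : ℝ)) = (4:ℝ)^m := by
      exact_mod_cast congrArg (Nat.cast (R := ℝ)) (Nat.sum_range_choose_halfway m)
    have s1 : (∑ j ∈ Finset.range (m+1+1), ((2*(m+1)+1).choose j : ℝ)) = (4:ℝ)^(m+1) := by
      exact_mod_cast congrArg (Nat.cast (R := ℝ)) (Nat.sum_range_choose_halfway (m+1))
    have s2 : (∑ j ∈ Finset.range (m+2+1), ((2*(m+2)+1).choose j : ℝ)) = (4:ℝ)^(m+2) := by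
      exact_mod_cast congrArg (Nat.cast (R := ℝ)) (Nat.sum_range_choose_halfway (m+2))
    rw [s0, s1, s2]
    have d0 : (((2*m)‼ : ℕ) : ℝ) = 2^m * ((m ! : ℕ) : ℝ) := by
      rw [Nat.doubleFactorial_two_mul]; push_cast; ring
    have d1 : (((2*(m+1))‼ : ℕ) : ℝ) = 2^(m+1) * (((m+1)! : ℕ) : ℝ) := by
      rw [Nat.doubleFactorial_two_mul]; push_cast; ring
    have d2 : (((2*(m+2))‼ : ℕ) : ℝ) = 2^(m+2) * (((m+2)! : ℕ) : ℝ) := by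
      rw [Nat.doubleFactorial_two_mul]; push_cast; ring
    rw [d0, d1, d2]
    have F2 : (((m+2)! : ℕ) : ℝ) = ((m:ℝ)+2)*((m:ℝ)+1)*((m ! : ℕ) : ℝ) := f2R m
    have F1 : (((m+1)! : ℕ) : ℝ) = ((m:ℝ)+1)*((m ! : ℕ) : ℝ) := f1R m
    rw [F2, F1]
    have h4 : ∀ t : ℕ, (4:ℝ)^t = 2^t * 2^t := by
      intro t; rw [show (4:ℝ) = 2*2 by norm_num, mul_pow]
    simp only [h4]
    have p1 : ((m ! : ℕ) : ℝ) ≠ 0 := factR_ne _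
    have p2 : ((2:ℝ))^m ≠ 0 := by positivity
    have q1 : ((m:ℝ)+2) ≠ 0 := by positivity
    have q2 : ((m:ℝ)+1) ≠ 0 := by positivity
    norm_num
    field_simp
    ring
  linear_combination main + e0 + e1 + e2

theorem stmt7 (n : ℕ) (hn : 1 ≤ n) (x : ℝ) :
    hp (n-1) x * gp n x - gp (n-1) x * hp n x = (2*n-1)! * x := by
  obtain ⟨m, rfl⟩ : ∃ m, n = m+1 := ⟨n-1, by omega⟩
  clear hn
  induction m with
  | zero =>
    norm_num [gp, hp, Finset.sum_range_succ, Nat.doubleFactorial, Nat.factorial]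
    ring
  | succ m ih =>
    rw [show m+1-1 = m by omega, show 2*(m+1)-1 = 2*m+1 by omega] at ih
    rw [show m+1+1-1 = m+1 by omega, show 2*(m+1+1)-1 = (2*m+1)+2 by omega,
        show m+1+1 = m+2 by ring, grec m x, hrec m x]
    have hf : ((((2*m+1)+2)! : ℕ) : ℝ) = (2*(m:ℝ)+3)*(2*(m:ℝ)+2)*(((2*m+1)! : ℕ) : ℝ) := by
      rw [f2R]; push_cast; ring
    rw [hf]
    linear_combination ((2*(m:ℝ)+3)*(2*(m:ℝ)+2)) * ih
end

section
/- For every integer n ≥ 1 and all x ∈ ℝ, the identity h_{n-1}(x) g'_{n-1}(x) + x h_{n-1}(x) g_{n-1}(x) - h'_{n-1}(x) g_{n-1}(x) - g_{n-1}(x)² = (2n-1)! holds. -/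
open Nat Finset MeasureTheory Real

open Polynomial

noncomputable def ga (m i : ℕ) : ℝ := ((2*m+1)! : ℝ) / ((2*(m-i))‼ * (2*i+1)!)

noncomputable def hb (m i : ℕ) : ℝ :=
  ((m+i)! * (m-i)! : ℝ) / ((2*(m-i))‼ * (2*i)!) *
    (∑ j ∈ Finset.range (m-i+1), ((2*m+1).choose j : ℝ))

noncomputable def Gpoly (m : ℕ) : Polynomial ℝ :=
  ∑ i ∈ Finset.range (m+1), C (ga m i) * X^(2*i+1)

noncomputable def Hpoly (m : ℕ) : Polynomial ℝ :=
  ∑ i ∈ Finset.range (m+1), C (hb m i) * X^(2*i)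

lemma gp_eval (m : ℕ) (x : ℝ) : gp m x = (Gpoly m).eval x := by
  simp [gp, Gpoly, ga, eval_finset_sum]

lemma hp_eval (m : ℕ) (x : ℝ) : hp m x = (Hpoly m).eval x := by
  simp [hp, Hpoly, hb, eval_finset_sum, mul_assoc]

lemma derivG (m : ℕ) : derivative (Gpoly m)
    = ∑ i ∈ Finset.range (m+1), C (ga m i * (2*i+1)) * X^(2*i) := by
  rw [Gpoly, derivative_sum]
  refine Finset.sum_congr rfl fun i _ => ?_
  rw [derivative_C_mul, derivative_X_pow, Nat.add_sub_cancel, ← mul_assoc, ← C_mul]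
  congr 2
  push_cast; ring

lemma derivG2 (m : ℕ) : derivative (derivative (Gpoly m))
    = ∑ i ∈ Finset.range m, C (ga m (i+1) * (2*(i+1)+1) * (2*(i+1))) * X^(2*i+1) := by
  rw [derivG, derivative_sum, Finset.sum_range_succ']
  have h0 : derivative (C (ga m 0 * (2*((0:ℕ):ℝ)+1)) * X ^ (2*0)) = 0 := by simp
  rw [h0, add_zero]
  refine Finset.sum_congr rfl fun i _ => ?_
  rw [derivative_C_mul, derivative_X_pow]
  have : 2*(i+1) - 1 = 2*i+1 := by omega
  rw [this, ← mul_assoc, ← C_mul]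
  congr 2
  push_cast; ring

lemma derivH (m : ℕ) : derivative (Hpoly m)
    = ∑ i ∈ Finset.range m, C (hb m (i+1) * (2*(i+1))) * X^(2*i+1) := by
  rw [Hpoly, derivative_sum, Finset.sum_range_succ']
  have h0 : derivative (C (hb m 0) * X ^ (2*0)) = 0 := by simp
  rw [h0, add_zero]
  refine Finset.sum_congr rfl fun i _ => ?_
  rw [derivative_C_mul, derivative_X_pow]
  have : 2*(i+1) - 1 = 2*i+1 := by omega
  rw [this, ← mul_assoc, ← C_mul]
  congr 2
  push_cast; ring

lemma derivH2 (m : ℕ) : derivative (derivative (Hpoly m))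
    = ∑ i ∈ Finset.range m, C (hb m (i+1) * (2*(i+1)) * (2*i+1)) * X^(2*i) := by
  rw [derivH, derivative_sum]
  refine Finset.sum_congr rfl fun i _ => ?_
  rw [derivative_C_mul, derivative_X_pow, Nat.add_sub_cancel, ← mul_assoc, ← C_mul]
  congr 2
  push_cast; ring

lemma X_derivH (m : ℕ) : X * derivative (Hpoly m)
    = ∑ i ∈ Finset.range (m+1), C (hb m i * (2*i)) * X^(2*i) := by
  rw [Hpoly, derivative_sum, Finset.mul_sum]
  refine Finset.sum_congr rfl fun i _ => ?_
  rcases i with _ | j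
  · simp
  · rw [derivative_C_mul, derivative_X_pow]
    have : 2*(j+1) - 1 = 2*j+1 := by omega
    rw [this, C_mul, show 2*(j+1) = (2*j+1)+1 from by omega, pow_succ]
    push_cast
    ring

lemma TI1 (m i : ℕ) (h : i < m) :
    ga m (i+1) * (2*(i+1)+1) * (2*(i+1)) = (2*m+1) * ga m i - ga m i * (2*i+1) := by
  obtain ⟨k, rfl⟩ : ∃ k, m = i + k + 1 := ⟨m - i - 1, by omega⟩
  simp only [ga]
  have h1 : i + k + 1 - (i+1) = k := by omega
  have h2 : i + k + 1 - i = k + 1 := by omega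
  rw [h1, h2]
  have h3 : 2*(k+1) = 2*k+2 := by ring
  rw [h3, Nat.doubleFactorial_add_two]
  have h4 : (2*(i+1)+1)! = (2*(i+1)+1) * ((2*i+2) * (2*i+1)!) := by
    rw [show 2*(i+1)+1 = (2*i+2)+1 from by ring, Nat.factorial_succ,
      show 2*i+2 = (2*i+1)+1 from rfl, Nat.factorial_succ]
  rw [h4]
  have d1 : ((2*k)‼ : ℝ) ≠ 0 := by
    exact_mod_cast (Nat.doubleFactorial_pos _).ne'
  have d2 : ((2*i+1)! : ℝ) ≠ 0 := by exact_mod_cast (Nat.factorial_pos _).ne'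
  push_cast
  field_simp
  ring

set_option maxHeartbeats 1000000 in
lemma TI2 (m i : ℕ) (h : i < m) :
    hb m (i+1) * (2*(i+1)) * (2*i+1)
      = hb m i * (2*i) + (2*m+2) * hb m i - 2 * (ga m i * (2*i+1)) := by
  obtain ⟨k, rfl⟩ : ∃ k, m = i + k + 1 := ⟨m - i - 1, by omega⟩
  simp only [hb, ga]
  have h1 : i + k + 1 - (i+1) = k := by omega
  have h2 : i + k + 1 - i = k + 1 := by omega
  rw [h1, h2]
  rw [show 2*(k+1) = 2*k+2 from by ring, Nat.doubleFactorial_add_two]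
  rw [Finset.sum_range_succ (fun j => (((2*(i+k+1)+1).choose j : ℕ) : ℝ)) (k+1)]
  have h4 : (2*(i+1))! = (2*i+2) * ((2*i+1) * (2*i)!) := by
    rw [show 2*(i+1) = (2*i+1)+1 from by ring, Nat.factorial_succ,
      show 2*i+1 = (2*i)+1 from rfl, Nat.factorial_succ]
  rw [h4]
  have h5 : (i+k+1+(i+1))! = (i+k+1+i+1) * (i+k+1+i)! := by
    rw [show i+k+1+(i+1) = (i+k+1+i)+1 from by omega, Nat.factorial_succ]
  rw [h5]
  have h6 : (k+1)! = (k+1) * k ! := rfl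
  rw [h6]
  have hch : ((2*(i+k+1)+1).choose (k+1) : ℝ)
      = ((2*(i+k+1)+1)! : ℝ) / ((k+1) * k ! * ((i+k+1+i+1) * (i+k+1+i)!)) := by
    have hle : k + 1 ≤ 2*(i+k+1)+1 := by omega
    have := Nat.choose_mul_factorial_mul_factorial hle
    rw [show 2*(i+k+1)+1-(k+1) = i+k+1+i+1 from by omega] at this
    have h7 : (i+k+1+i+1)! = (i+k+1+i+1) * (i+k+1+i)! := by
      rw [show i+k+1+i+1 = (i+k+1+i)+1 from rfl, Nat.factorial_succ]
    rw [h6, h7] at this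
    have hne : ((k+1) : ℝ) * k ! * ((i+k+1+i+1) * (i+k+1+i)!) ≠ 0 := by positivity
    rw [eq_div_iff hne]
    exact_mod_cast (by push_cast [← this]; ring)
  rw [hch]
  have h8 : (2*i+1)! = (2*i+1) * (2*i)! := by
    rw [show 2*i+1 = (2*i)+1 from rfl, Nat.factorial_succ]
  rw [h8]
  have d1 : ((2*k)‼ : ℝ) ≠ 0 := by exact_mod_cast (Nat.doubleFactorial_pos _).ne'
  have d2 : ((2*i)! : ℝ) ≠ 0 := by exact_mod_cast (Nat.factorial_pos _).ne'
  have d3 : ((i+k+1+i)! : ℝ) ≠ 0 := by exact_mod_cast (Nat.factorial_pos _).ne'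
  have d4 : (k ! : ℝ) ≠ 0 := by exact_mod_cast (Nat.factorial_pos _).ne'
  push_cast
  field_simp
  ring

lemma ga_self (m : ℕ) : ga m m = 1 := by
  simp [ga]
  exact (Nat.factorial_pos _).ne'

lemma hb_self (m : ℕ) : hb m m = 1 := by
  simp [hb]
  rw [← two_mul]
  exact div_self (by exact_mod_cast (Nat.factorial_pos _).ne')

lemma ode1 (m : ℕ) : derivative (derivative (Gpoly m))
    = C (2*(m:ℝ)+1) * Gpoly m - X * derivative (Gpoly m) := by
  rw [derivG2, derivG, Gpoly, Finset.mul_sum, Finset.mul_sum, ← Finset.sum_sub_distrib,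
    Finset.sum_range_succ]
  have hlast : C (2*(m:ℝ)+1) * (C (ga m m) * X^(2*m+1))
      - X * (C (ga m m * (2*m+1)) * X^(2*m)) = 0 := by
    have e1 : C (2*(m:ℝ)+1) * (C (ga m m) * X^(2*m+1))
        = C ((2*(m:ℝ)+1) * ga m m) * X^(2*m+1) := by rw [C_mul]; ring
    have e2 : X * (C (ga m m * (2*(m:ℝ)+1)) * X^(2*m))
        = C (ga m m * (2*(m:ℝ)+1)) * X^(2*m+1) := by rw [pow_succ]; ring
    rw [e1, e2, ← sub_mul, ← C_sub, ga_self,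
      show (2*(m:ℝ)+1) * 1 - 1 * (2*(m:ℝ)+1) = 0 from by ring, C_0, zero_mul]
  rw [hlast, add_zero]
  refine Finset.sum_congr rfl fun i hi => ?_
  have hi' : i < m := Finset.mem_range.mp hi
  have e1 : C (2*(m:ℝ)+1) * (C (ga m i) * X^(2*i+1))
      = C ((2*(m:ℝ)+1) * ga m i) * X^(2*i+1) := by rw [C_mul]; ring
  have e2 : X * (C (ga m i * (2*(i:ℝ)+1)) * X^(2*i))
      = C (ga m i * (2*(i:ℝ)+1)) * X^(2*i+1) := by rw [pow_succ]; ring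
  rw [e1, e2, ← sub_mul, ← C_sub]
  exact congrArg (· * X^(2*i+1)) (congrArg C (TI1 m i hi'))

lemma ode2 (m : ℕ) : derivative (derivative (Hpoly m))
    = X * derivative (Hpoly m) + C (2*(m:ℝ)+2) * Hpoly m - C 2 * derivative (Gpoly m) := by
  rw [derivH2, X_derivH, Hpoly, derivG, Finset.mul_sum, Finset.mul_sum,
    ← Finset.sum_add_distrib, ← Finset.sum_sub_distrib, Finset.sum_range_succ]
  have hlast : C (hb m m * (2*m)) * X^(2*m) + C (2*(m:ℝ)+2) * (C (hb m m) * X^(2*m))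
      - C 2 * (C (ga m m * (2*m+1)) * X^(2*m)) = 0 := by
    have e1 : C (2*(m:ℝ)+2) * (C (hb m m) * X^(2*m))
        = C ((2*(m:ℝ)+2) * hb m m) * X^(2*m) := by rw [C_mul]; ring
    have e2 : C 2 * (C (ga m m * (2*(m:ℝ)+1)) * X^(2*m))
        = C (2 * (ga m m * (2*(m:ℝ)+1))) * X^(2*m) := by simp only [C_mul]; ring
    rw [e1, e2, ← add_mul, ← sub_mul, ← C_add, ← C_sub, ga_self, hb_self,
      show (1:ℝ) * (2*(m:ℝ)) + (2*(m:ℝ)+2) * 1 - 2 * (1 * (2*(m:ℝ)+1)) = 0 from by ring,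
      C_0, zero_mul]
  rw [hlast, add_zero]
  refine Finset.sum_congr rfl fun i hi => ?_
  have hi' : i < m := Finset.mem_range.mp hi
  have e1 : C (2*(m:ℝ)+2) * (C (hb m i) * X^(2*i))
      = C ((2*(m:ℝ)+2) * hb m i) * X^(2*i) := by rw [C_mul]; ring
  have e2 : C 2 * (C (ga m i * (2*(i:ℝ)+1)) * X^(2*i))
      = C (2 * (ga m i * (2*(i:ℝ)+1))) * X^(2*i) := by simp only [C_mul]; ring
  rw [e1, e2, ← add_mul, ← sub_mul, ← C_add, ← C_sub]
  exact congrArg (· * X^(2*i)) (congrArg C (TI2 m i hi'))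

noncomputable def Wpoly (m : ℕ) : Polynomial ℝ :=
  Hpoly m * derivative (Gpoly m) + X * Hpoly m * Gpoly m
    - derivative (Hpoly m) * Gpoly m - (Gpoly m)^2

lemma derivW (m : ℕ) : derivative (Wpoly m) = 0 := by
  have o1 := ode1 m
  have o2 := ode2 m
  rw [Wpoly, show (Gpoly m)^2 = Gpoly m * Gpoly m from sq (Gpoly m)]
  simp only [derivative_sub, derivative_add, derivative_mul, derivative_X]
  rw [o1, o2]
  simp only [C_add, C_mul, C_1, map_ofNat]
  ring

lemma eval0G (m : ℕ) : (Gpoly m).eval 0 = 0 := by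
  rw [Gpoly, eval_finset_sum]
  refine Finset.sum_eq_zero fun i _ => ?_
  simp [zero_pow (show 2*i+1 ≠ 0 by omega)]

lemma eval0G' (m : ℕ) : (derivative (Gpoly m)).eval 0 = ga m 0 := by
  rw [derivG, eval_finset_sum, Finset.sum_range_succ']
  have : ∀ i ∈ Finset.range m,
      (C (ga m (i+1) * (2*((i+1:ℕ):ℝ)+1)) * X^(2*(i+1))).eval 0 = 0 := by
    intro i _
    simp [zero_pow (show 2*(i+1) ≠ 0 by omega)]
  rw [Finset.sum_eq_zero this, zero_add]
  norm_num

lemma eval0H (m : ℕ) : (Hpoly m).eval 0 = hb m 0 := by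
  rw [Hpoly, eval_finset_sum, Finset.sum_range_succ']
  have : ∀ i ∈ Finset.range m, (C (hb m (i+1)) * X^(2*(i+1))).eval 0 = 0 := by
    intro i _
    simp [zero_pow (show 2*(i+1) ≠ 0 by omega)]
  rw [Finset.sum_eq_zero this, zero_add]
  norm_num

lemma eval0H' (m : ℕ) : (derivative (Hpoly m)).eval 0 = 0 := by
  rw [derivH, eval_finset_sum]
  refine Finset.sum_eq_zero fun i _ => ?_
  simp [zero_pow (show 2*i+1 ≠ 0 by omega)]

lemma W0 (m : ℕ) : (Wpoly m).eval 0 = ((2*m+1)! : ℝ) := by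
  simp only [Wpoly, eval_sub, eval_add, eval_mul, eval_pow, eval_X,
    eval0G, eval0G', eval0H, eval0H']
  ring_nf
  rw [show hb m 0 * ga m 0 = ((2*m+1)! : ℝ) from ?_]
  · ring_nf
  · simp only [hb, ga, Nat.sub_zero, Nat.add_zero, Nat.factorial_zero]
    have hs : ∑ j ∈ Finset.range (m+1), (((2*m+1).choose j : ℕ) : ℝ) = (4:ℝ)^m := by
      rw [← Nat.cast_sum]
      rw [Nat.sum_range_choose_halfway m]
      push_cast; ring
    rw [hs, Nat.doubleFactorial_two_mul]
    have d1 : ((m)! : ℝ) ≠ 0 := by exact_mod_cast (Nat.factorial_pos _).ne'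
    have d2 : ((2:ℝ))^m ≠ 0 := by positivity
    have h4 : (4:ℝ)^m = 2^m * 2^m := by rw [← mul_pow]; norm_num
    push_cast
    rw [h4]
    field_simp
    ring

lemma Wconst (m : ℕ) : Wpoly m = C ((2*m+1)! : ℝ) := by
  have h0 : (Wpoly m).natDegree = 0 :=
    natDegree_eq_zero_of_derivative_eq_zero (derivW m)
  have h1 : Wpoly m = C ((Wpoly m).coeff 0) := eq_C_of_natDegree_eq_zero h0
  rw [h1, coeff_zero_eq_eval_zero]
  exact congrArg C (W0 m)

theorem stmt8 (n : ℕ) (hn : 1 ≤ n) (x : ℝ) :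
    hp (n-1) x * deriv (gp (n-1)) x + x * hp (n-1) x * gp (n-1) x
      - deriv (hp (n-1)) x * gp (n-1) x - (gp (n-1) x)^2 = (2*n-1)! := by
  obtain ⟨m, rfl⟩ : ∃ m, n = m + 1 := ⟨n-1, by omega⟩
  have hm : m + 1 - 1 = m := rfl
  rw [hm]
  have hg : gp m = fun y => (Gpoly m).eval y := funext (gp_eval m)
  have hh : hp m = fun y => (Hpoly m).eval y := funext (hp_eval m)
  have hdg : deriv (gp m) x = (derivative (Gpoly m)).eval x := by
    rw [hg]; exact Polynomial.deriv _
  have hdh : deriv (hp m) x = (derivative (Hpoly m)).eval x := by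
    rw [hh]; exact Polynomial.deriv _
  rw [hdg, hdh, gp_eval, hp_eval]
  have : (Hpoly m).eval x * (derivative (Gpoly m)).eval x
      + x * (Hpoly m).eval x * (Gpoly m).eval x
      - (derivative (Hpoly m)).eval x * (Gpoly m).eval x
      - ((Gpoly m).eval x)^2 = (Wpoly m).eval x := by
    simp only [Wpoly, eval_sub, eval_add, eval_mul, eval_pow, eval_X]
    try ring
  have h21 : 2*m+1 = 2*(m+1)-1 := by omega
  rw [this, Wconst, eval_C, h21]
end
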